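/- arXiv:1610.01278 — 3 statements merged into one kernel-verified Lean document; each statement's English description precedes it below -/
import Mathlib

section
/- Let G/K be a generalized flag manifold with exactly two isotropy summands 𝔪 = 𝔪₁ ⊕ 𝔪₂ (with the convention [𝔪₁, 𝔪₁] ⊆ 𝔨 ⊕ 𝔪₂), and let G/K₁ be the corresponding M-space. Suppose there exists j ∈ {1, 2} such that 𝔪ⱼ is reducible as an Ad(K₁)-module while 𝔪ᵢ (i ≠ j) is irreducible as an Ad(K₁)-module. If (G/K₁, g) is a g.o. space, then g = ⟨·,·⟩ = μ B(·,·)|_{𝔰 ⊕ 𝔪ⱼ} + μᵢ B(·,·)|_{𝔪ᵢ} for some μ, μᵢ > 0. -/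
open Module

/-- A submodule `W` of a Lie algebra is invariant under the (infinitesimal) adjoint action
of the Lie subalgebra `k`.  For a connected Lie group this corresponds to `Ad(K)`-invariance. -/
def AdInvariant {𝔤 : Type*} [LieRing 𝔤] [LieAlgebra ℝ 𝔤]
    (k : LieSubalgebra ℝ 𝔤) (W : Submodule ℝ 𝔤) : Prop :=
  ∀ x ∈ k, ∀ w ∈ W, ⁅x, w⁆ ∈ W

/-- `W` is a nonzero irreducible module for the adjoint action of `k`
(i.e. an irreducible `Ad(K)`-module). -/
def AdIrreducible {𝔤 : Type*} [LieRing 𝔤] [LieAlgebra ℝ 𝔤]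
    (k : LieSubalgebra ℝ 𝔤) (W : Submodule ℝ 𝔤) : Prop :=
  AdInvariant k W ∧ W ≠ ⊥ ∧
    ∀ U : Submodule ℝ 𝔤, U ≤ W → AdInvariant k U → U = ⊥ ∨ U = W

/-- `W` is a reducible `Ad(K)`-module: invariant, with a proper nonzero invariant submodule. -/
def AdReducible {𝔤 : Type*} [LieRing 𝔤] [LieAlgebra ℝ 𝔤]
    (k : LieSubalgebra ℝ 𝔤) (W : Submodule ℝ 𝔤) : Prop :=
  AdInvariant k W ∧ ∃ U : Submodule ℝ 𝔤, U ≤ W ∧ AdInvariant k U ∧ U ≠ ⊥ ∧ U ≠ W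

/-- Equivalence of two `Ad(K)`-modules `U` and `V`: an injective intertwining linear map
carrying `U` onto `V`. -/
def AdEquiv {𝔤 : Type*} [LieRing 𝔤] [LieAlgebra ℝ 𝔤]
    (k : LieSubalgebra ℝ 𝔤) (U V : Submodule ℝ 𝔤) : Prop :=
  ∃ f : 𝔤 →ₗ[ℝ] 𝔤, Submodule.map f U = V ∧ (∀ u ∈ U, f u = 0 → u = 0) ∧
    ∀ x ∈ k, ∀ u ∈ U, f ⁅x, u⁆ = ⁅x, f u⁆

/-- The g.o. property of the `G`-invariant metric with associated operator `Λ` on the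
homogeneous space with isotropy algebra `k` and tangent space `n`: every geodesic through
the origin is homogeneous, i.e. (by the standard criterion) for every `x ∈ n` there is
`a ∈ k` such that `⁅a + x, Λ x⁆ ∈ k`. -/
def IsGOMetric {𝔤 : Type*} [LieRing 𝔤] [LieAlgebra ℝ 𝔤]
    (k : LieSubalgebra ℝ 𝔤) (n : Submodule ℝ 𝔤) (Λ : 𝔤 →ₗ[ℝ] 𝔤) : Prop :=
  ∀ x ∈ n, ∃ a ∈ k, ⁅a + x, Λ x⁆ ∈ k.toSubmodule

/-! The g.o. condition gives, for every `x ∈ 𝔫`, some `a ∈ 𝔨₁` with `[a + x, Λx] ∈ 𝔨₁`. Pairing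
this with the Killing-orthogonal complement of `𝔨₁` in `𝔨` and polarising shows that `Λ` commutes
with all of `ad 𝔨`, not only with `ad 𝔨₁`. Schur's lemma, together with the inequivalence of
`𝔪₁` and `𝔪₂`, then makes `Λ` preserve `𝔰`, `𝔪₁`, `𝔪₂` and act on `𝔪ⱼ`, `𝔪ᵢ` by positive
scalars `μ`, `μᵢ`.

For `s ∈ 𝔰` the g.o. condition at `s + v`, `v ∈ 𝔪ⱼ`, shows that `b = μ s - Λ s ∈ 𝔰` acts on
each `v` like some element of `𝔨₁`, so `ad b` preserves every `Ad(K₁)`-submodule of `𝔪ⱼ`. If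
`ad b` did not vanish on `𝔪ⱼ`, every `ad s'`, `s' ∈ 𝔰`, would be proportional to it there (two
commuting skew `𝔨`-maps of an irreducible module), so a proper `Ad(K₁)`-submodule of `𝔪ⱼ` would
be `Ad(K)`-invariant. Hence `[b, 𝔪ⱼ] = 0`. If `b ≠ 0`, then `b` and a suitable `s - ρ b`
separate `𝔪ⱼ` from `𝔪ᵢ`, which forces `[𝔪ⱼ, 𝔪ᵢ] = 0`; but then `𝔪ⱼ + [𝔪ⱼ, 𝔪ⱼ]` is a proper
nonzero ideal of the simple algebra `𝔤`. So `b = 0`, i.e. `Λ = μ` on `𝔰`. -/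

theorem LinearMap.BilinForm.exists_hasEigenvalue_of_isAdjointPair {V : Type*} [AddCommGroup V]
    [Module ℝ V] [FiniteDimensional ℝ V] [Nontrivial V] {Φ : LinearMap.BilinForm ℝ V}
    (hΦ : Φ.IsSymm) (hpos : ∀ x, x ≠ 0 → 0 < Φ x x) {f : Module.End ℝ V}
    (hf : Φ.IsAdjointPair Φ f f) : ∃ c, Module.End.HasEigenvalue f c := by
  let core : InnerProductSpace.Core ℝ V :=
    { inner := fun x y => Φ x y
      conj_inner_symm := fun x y => hΦ.eq y x
      re_inner_nonneg := fun x => by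
        rcases eq_or_ne x 0 with rfl | hx
        · simp
        · exact (hpos x hx).le
      add_left := fun x y z => by simp
      smul_left := fun x y r => by simp
      definite := fun x hx => by_contra fun h => (hpos x h).ne' hx }
  let := InnerProductSpace.Core.toNormedAddCommGroup (cd := core)
  let := InnerProductSpace.ofCore core.toCore
  exact ⟨_, LinearMap.IsSymmetric.hasEigenvalue_iSup_of_finiteDimensional hf⟩

namespace LinearMap.BilinForm

variable {R M : Type*} [CommRing R] [AddCommGroup M] [Module R M] {B : LinearMap.BilinForm R M}
  {A C : Submodule R M}

theorem mem_right_of_mem_sup_of_orthogonal (hA : ∀ a ∈ A, B a a = 0 → a = 0)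
    (hAC : ∀ a ∈ A, ∀ c ∈ C, B c a = 0) {x : M} (hx : x ∈ A ⊔ C)
    (hxA : ∀ a ∈ A, B x a = 0) : x ∈ C := by
  obtain ⟨a, ha, c, hc, rfl⟩ := Submodule.mem_sup.mp hx
  have hBa : B a a = 0 := by simpa [hAC a ha c hc] using hxA a ha
  simpa [hA a ha hBa] using hc

theorem mapsTo_right_of_mapsTo_left (hA : ∀ a ∈ A, B a a = 0 → a = 0)
    (hAC : ∀ a ∈ A, ∀ c ∈ C, B c a = 0) {T : M →ₗ[R] M} (hTA : Set.MapsTo T A A)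
    (hTC : Set.MapsTo T C (A ⊔ C : Submodule R M)) (hT : ∀ c ∈ C, ∀ a ∈ A, B (T c) a = B c (T a)) :
    Set.MapsTo T C C := fun c hc =>
  mem_right_of_mem_sup_of_orthogonal hA hAC (hTC hc) fun a ha => by
    rw [hT c hc a ha, hAC _ (hTA ha) c hc]

end LinearMap.BilinForm

section LieAlgebra

variable {𝔤 : Type*} [LieRing 𝔤] [LieAlgebra ℝ 𝔤]

def AdEquivariantOn (k : LieSubalgebra ℝ 𝔤) (W : Submodule ℝ 𝔤) (T : 𝔤 →ₗ[ℝ] 𝔤) : Prop :=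
  ∀ x ∈ k, ∀ w ∈ W, T ⁅x, w⁆ = ⁅x, T w⁆

theorem adEquivariantOn_ad {k : LieSubalgebra ℝ 𝔤} {z : 𝔤} (hz : ∀ x ∈ k, ⁅z, x⁆ = 0)
    (W : Submodule ℝ 𝔤) : AdEquivariantOn k W (LieAlgebra.ad ℝ 𝔤 z) := fun x hx w _ => by
  simp only [LieAlgebra.ad_apply, leibniz_lie z x w, hz x hx, zero_lie, zero_add]

section Schur

variable {k : LieSubalgebra ℝ 𝔤} {U V W : Submodule ℝ 𝔤} {S T : 𝔤 →ₗ[ℝ] 𝔤}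

theorem AdInvariant.inf_ker (hW : AdInvariant k W) (hT : AdEquivariantOn k W T) :
    AdInvariant k (W ⊓ LinearMap.ker T) := by
  rintro x hx w ⟨hwW, hwT⟩
  refine ⟨hW x hx w hwW, ?_⟩
  simp only [SetLike.mem_coe, LinearMap.mem_ker] at hwT ⊢
  rw [hT x hx w hwW, hwT, lie_zero]

theorem AdIrreducible.inf_ker_eq_bot_or (hW : AdIrreducible k W) (hT : AdEquivariantOn k W T) :
    W ⊓ LinearMap.ker T = ⊥ ∨ ∀ w ∈ W, T w = 0 := by
  refine (hW.2.2 _ inf_le_left (hW.1.inf_ker hT)).imp id fun h w hw => ?_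
  rw [← h] at hw
  exact hw.2

theorem AdIrreducible.eq_zero_of_not_adEquiv (hU : AdIrreducible k U) (hV : AdIrreducible k V)
    (hUV : ¬ AdEquiv k U V) (hTUV : Set.MapsTo T U V) (hT : AdEquivariantOn k U T) :
    ∀ u ∈ U, T u = 0 := by
  refine (hU.inf_ker_eq_bot_or hT).resolve_left fun hker => ?_
  have hinv : AdInvariant k (U.map T) := by
    rintro x hx _ ⟨u, hu, rfl⟩
    exact ⟨⁅x, u⁆, hU.1 x hx u hu, hT x hx u hu⟩
  rcases hV.2.2 _ (Submodule.map_le_iff_le_comap.mpr hTUV) hinv with hbot | htop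
  · refine hU.2.1 (eq_bot_iff.mpr fun u hu => ?_)
    rw [← hker]
    exact ⟨hu, (Submodule.eq_bot_iff _).mp hbot _ (Submodule.mem_map_of_mem hu)⟩
  · refine hUV ⟨T, htop, fun u hu hTu => ?_, hT⟩
    have : u ∈ U ⊓ LinearMap.ker T := ⟨hu, hTu⟩
    simpa [hker] using this

theorem AdInvariant.adEquivariantOn_projection (hU : AdInvariant k U) (hV : AdInvariant k V)
    (hUV : IsCompl U V) : AdEquivariantOn k ⊤ (U.projection V hUV) := by
  intro x hx y _
  obtain ⟨u, hu, v, hv, rfl⟩ :=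
    Submodule.mem_sup.mp (hUV.sup_eq_top ▸ Submodule.mem_top : y ∈ U ⊔ V)
  rw [lie_add, map_add, map_add, Submodule.projection_apply_of_mem_left hUV hu,
    Submodule.projection_apply_of_mem_left hUV (hU x hx u hu),
    Submodule.projection_apply_of_mem_right hUV hv,
    Submodule.projection_apply_of_mem_right hUV (hV x hx v hv), add_zero, add_zero]

theorem AdIrreducible.mapsTo_of_not_adEquiv (hU : AdIrreducible k U) (hV : AdIrreducible k V)
    (hUV : ¬ AdEquiv k U V) {P : Submodule ℝ 𝔤} (hP : AdInvariant k P) (hVP : IsCompl V P)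
    (hT : AdEquivariantOn k U T) : Set.MapsTo T U P := by
  have hπ := hV.1.adEquivariantOn_projection hP hVP
  intro u hu
  refine (Submodule.projection_apply_eq_zero_iff hVP).mp <|
    hU.eq_zero_of_not_adEquiv hV hUV (T := V.projection P hVP ∘ₗ T)
      (fun u _ => Submodule.projection_apply_mem hVP _) (fun x hx w hw => ?_) u hu
  simp only [LinearMap.comp_apply, hT x hx w hw, hπ x hx _ Submodule.mem_top]

variable [FiniteDimensional ℝ 𝔤]

theorem AdIrreducible.surjOn (hW : AdIrreducible k W) (hTW : Set.MapsTo T W W)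
    (hT : AdEquivariantOn k W T) {w₀ : 𝔤} (hw₀ : w₀ ∈ W) (hTw₀ : T w₀ ≠ 0) :
    Set.SurjOn T W W := by
  have hker := (hW.inf_ker_eq_bot_or hT).resolve_right fun h => hTw₀ (h w₀ hw₀)
  have hinj : Function.Injective (T.restrict hTW) := by
    rw [← LinearMap.ker_eq_bot, eq_bot_iff]
    intro x hx
    have : (x : 𝔤) ∈ W ⊓ LinearMap.ker T := ⟨x.2, congrArg Subtype.val hx⟩
    simpa [hker] using this
  intro y hy
  obtain ⟨x, hx⟩ := LinearMap.injective_iff_surjective.mp hinj ⟨y, hy⟩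
  exact ⟨x, x.2, congrArg Subtype.val hx⟩

variable {B : LinearMap.BilinForm ℝ 𝔤}

theorem AdIrreducible.exists_eq_smul_of_isSymm (hB : B.IsSymm)
    (hBW : ∀ w ∈ W, w ≠ 0 → B w w < 0) (hW : AdIrreducible k W) (hTW : Set.MapsTo T W W)
    (hTsymm : ∀ x ∈ W, ∀ y ∈ W, B (T x) y = B x (T y)) (hT : AdEquivariantOn k W T) :
    ∃ c : ℝ, ∀ w ∈ W, T w = c • w := by
  have : Nontrivial W := Submodule.nontrivial_iff_ne_bot.mpr hW.2.1
  obtain ⟨c, hc⟩ := LinearMap.BilinForm.exists_hasEigenvalue_of_isAdjointPair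
    (Φ := -B.restrict W) (f := T.restrict hTW)
    (hB.restrict W).neg (fun x hx => by simpa using hBW x x.2 (by simpa using hx))
    (fun x y => congrArg Neg.neg (hTsymm x x.2 y y.2))
  obtain ⟨x, hx⟩ := hc.exists_hasEigenvector
  have hTx : T x = c • (x : 𝔤) := congrArg Subtype.val hx.apply_eq_smul
  have hTc : AdEquivariantOn k W (T - c • LinearMap.id) := fun y hy w hw => by
    simp [hT y hy w hw]
  refine ⟨c, fun w hw => ?_⟩
  rcases hW.inf_ker_eq_bot_or hTc with hker | hc0
  · have hxker : (x : 𝔤) ∈ W ⊓ LinearMap.ker (T - c • LinearMap.id) := ⟨x.2, by simp [hTx]⟩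
    exact absurd (by simpa [hker] using hxker) hx.2
  · simpa [sub_eq_zero] using hc0 w hw

theorem AdIrreducible.exists_pos_eq_smul_of_isSymm (hB : B.IsSymm)
    (hBW : ∀ w ∈ W, w ≠ 0 → B w w < 0) (hW : AdIrreducible k W) (hTW : Set.MapsTo T W W)
    (hTsymm : ∀ x ∈ W, ∀ y ∈ W, B (T x) y = B x (T y)) (hT : AdEquivariantOn k W T)
    (hTpos : ∀ w ∈ W, w ≠ 0 → 0 < -B (T w) w) : ∃ c : ℝ, 0 < c ∧ ∀ w ∈ W, T w = c • w := by
  obtain ⟨c, hc⟩ := hW.exists_eq_smul_of_isSymm hB hBW hTW hTsymm hT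
  obtain ⟨w, hw, hw0⟩ := Submodule.exists_mem_ne_zero_of_ne_bot hW.2.1
  have h := hTpos w hw hw0
  rw [hc w hw, map_smul, LinearMap.smul_apply, smul_eq_mul] at h
  exact ⟨c, by nlinarith [hBW w hw hw0], hc⟩

theorem AdIrreducible.exists_eq_smul_of_skew (hB : B.IsSymm)
    (hBW : ∀ w ∈ W, w ≠ 0 → B w w < 0) (hW : AdIrreducible k W)
    (hSW : Set.MapsTo S W W) (hTW : Set.MapsTo T W W)
    (hSskew : ∀ x ∈ W, ∀ y ∈ W, B (S x) y = -B x (S y))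
    (hTskew : ∀ x ∈ W, ∀ y ∈ W, B (T x) y = -B x (T y))
    (hS : AdEquivariantOn k W S) (hT : AdEquivariantOn k W T)
    (hST : ∀ w ∈ W, S (T w) = T (S w)) {w₀ : 𝔤} (hw₀ : w₀ ∈ W) (hSw₀ : S w₀ ≠ 0) :
    ∃ ρ : ℝ, ∀ w ∈ W, T w = ρ • S w := by
  obtain ⟨c, hc⟩ := hW.exists_eq_smul_of_isSymm hB hBW (T := S ∘ₗ S) (hSW.comp hSW)
    (fun x hx y hy => by
      simp only [LinearMap.comp_apply]
      rw [hSskew _ (hSW hx) _ hy, hSskew _ hx _ (hSW hy), neg_neg])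
    (fun x hx w hw => by simp only [LinearMap.comp_apply, hS x hx w hw, hS x hx _ (hSW hw)])
  obtain ⟨e, he⟩ := hW.exists_eq_smul_of_isSymm hB hBW (T := S ∘ₗ T) (hSW.comp hTW)
    (fun x hx y hy => by
      simp only [LinearMap.comp_apply]
      rw [hSskew _ (hTW hx) _ hy, hTskew _ hx _ (hSW hy), neg_neg, hST y hy])
    (fun x hx w hw => by simp only [LinearMap.comp_apply, hT x hx w hw, hS x hx _ (hTW hw)])
  have hSS : ∀ w ∈ W, S (S w) = c • w := hc
  have hST' : ∀ w ∈ W, S (T w) = e • w := he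
  have hc0 : c ≠ 0 := by
    rintro rfl
    have h := hSskew _ hw₀ _ (hSW hw₀)
    rw [hSS w₀ hw₀, zero_smul, map_zero, neg_zero] at h
    exact (hBW _ (hSW hw₀) hSw₀).ne h
  refine ⟨e / c, fun w hw => ?_⟩
  have h : c • T w = e • S w := by rw [← hSS _ (hTW hw), hST' w hw, map_smul]
  rw [div_eq_inv_mul, mul_smul, ← h, inv_smul_smul₀ hc0]

theorem AdIrreducible.exists_lie_eq_smul_lie
    (hK : ∀ w ∈ W, w ≠ 0 → killingForm ℝ 𝔤 w w < 0) (hW : AdIrreducible k W) {b s : 𝔤}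
    (hb : b ∈ k) (hs : s ∈ k) (hbk : ∀ x ∈ k, ⁅b, x⁆ = 0) (hsk : ∀ x ∈ k, ⁅s, x⁆ = 0)
    {w₀ : 𝔤} (hw₀ : w₀ ∈ W) (hbw₀ : ⁅b, w₀⁆ ≠ 0) : ∃ ρ : ℝ, ∀ w ∈ W, ⁅s, w⁆ = ρ • ⁅b, w⁆ :=
  hW.exists_eq_smul_of_skew
    (LinearMap.BilinForm.isSymm_iff.mpr (LieModule.traceForm_isSymm ℝ 𝔤 𝔤)) hK
    (S := LieAlgebra.ad ℝ 𝔤 b) (T := LieAlgebra.ad ℝ 𝔤 s)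
    (fun w hw => hW.1 b hb w hw) (fun w hw => hW.1 s hs w hw)
    (fun x _ y _ => LieModule.traceForm_apply_lie_apply' ℝ 𝔤 𝔤 b x y)
    (fun x _ y _ => LieModule.traceForm_apply_lie_apply' ℝ 𝔤 𝔤 s x y)
    (adEquivariantOn_ad hbk W) (adEquivariantOn_ad hsk W)
    (fun w _ => by simp [leibniz_lie b s w, hbk s hs]) hw₀ hbw₀

theorem AdReducible.lie_eq_zero
    (hK : ∀ w ∈ W, w ≠ 0 → killingForm ℝ 𝔤 w w < 0) {𝔨 𝔨₁ 𝔰 : LieSubalgebra ℝ 𝔤}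
    (h𝔨sum : 𝔰.toSubmodule ⊔ 𝔨₁.toSubmodule = 𝔨.toSubmodule)
    (hcentral : ∀ s ∈ 𝔰, ∀ x ∈ 𝔨, ⁅s, x⁆ = 0) (hW : AdIrreducible 𝔨 W)
    (hred : AdReducible 𝔨₁ W) {b : 𝔤} (hb : b ∈ 𝔰)
    (hbW : ∀ U ≤ W, AdInvariant 𝔨₁ U → ∀ u ∈ U, ⁅b, u⁆ ∈ U) : ∀ w ∈ W, ⁅b, w⁆ = 0 := by
  by_contra! ⟨w₀, hw₀, hbw₀⟩
  have h𝔰𝔨 : ∀ {s}, s ∈ 𝔰 → s ∈ 𝔨 := fun hs => h𝔨sum.le (Submodule.mem_sup_left hs)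
  obtain ⟨-, U, hUW, hU, hU0, hUW'⟩ := hred
  refine (hW.2.2 U hUW fun z hz u hu => ?_).elim hU0 hUW'
  obtain ⟨s, hs, a, ha, rfl⟩ := Submodule.mem_sup.mp (h𝔨sum.ge hz)
  obtain ⟨ρ, hρ⟩ := hW.exists_lie_eq_smul_lie hK (h𝔰𝔨 hb) (h𝔰𝔨 hs) (hcentral b hb)
    (hcentral s hs) hw₀ hbw₀
  rw [add_lie, hρ u (hUW hu)]
  exact add_mem (U.smul_mem ρ (hbW U hUW hU u hu)) (hU a ha u hu)

end Schur

section Brackets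

variable {V W V' : Submodule ℝ 𝔤}

theorem lie_mem_of_surjOn {t : 𝔤} (htV : ∀ v ∈ V, ⁅t, v⁆ = 0)
    (htW : ∀ w ∈ W, ⁅t, w⁆ ∈ W) (ht : Set.SurjOn (LieAlgebra.ad ℝ 𝔤 t) W W)
    (hVW : ∀ v ∈ V, ∀ w ∈ W, ⁅v, w⁆ ∈ V ⊔ W) {v w : 𝔤} (hv : v ∈ V) (hw : w ∈ W) :
    ⁅v, w⁆ ∈ W := by
  obtain ⟨w', hw', rfl⟩ := ht hw
  obtain ⟨v'', hv'', w'', hw'', hsum⟩ := Submodule.mem_sup.mp (hVW v hv w' hw')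
  have hjac : ⁅v, ⁅t, w'⁆⁆ = ⁅t, ⁅v, w'⁆⁆ := by
    rw [leibniz_lie t v w', htV v hv, zero_lie, zero_add]
  rw [LieAlgebra.ad_apply, hjac, ← hsum, lie_add, htV _ hv'', zero_add]
  exact htW _ hw''

theorem lie_eq_zero_of_surjOn (hVW : Disjoint V W)
    (hbr : ∀ v ∈ V, ∀ w ∈ W, ⁅v, w⁆ ∈ V ⊔ W) {t₁ t₂ : 𝔤} (ht₁V : ∀ v ∈ V, ⁅t₁, v⁆ = 0)
    (ht₁W : ∀ w ∈ W, ⁅t₁, w⁆ ∈ W) (ht₁ : Set.SurjOn (LieAlgebra.ad ℝ 𝔤 t₁) W W)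
    (ht₂W : ∀ w ∈ W, ⁅t₂, w⁆ = 0) (ht₂V : ∀ v ∈ V, ⁅t₂, v⁆ ∈ V)
    (ht₂ : Set.SurjOn (LieAlgebra.ad ℝ 𝔤 t₂) V V) {v w : 𝔤} (hv : v ∈ V) (hw : w ∈ W) :
    ⁅v, w⁆ = 0 := by
  have hW : ⁅v, w⁆ ∈ W := lie_mem_of_surjOn ht₁V ht₁W ht₁ hbr hv hw
  have hV : ⁅w, v⁆ ∈ V := lie_mem_of_surjOn ht₂W ht₂V ht₂ (fun w hw v hv => by
    rw [sup_comm, ← lie_skew]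
    exact neg_mem (hbr v hv w hw)) hw hv
  rw [← lie_skew] at hV
  exact Submodule.disjoint_def.mp hVW _ (neg_mem_iff.mp hV) hW

theorem lie_mem_sup_span_lie {x : 𝔤} (hx : ∀ v ∈ V, ⁅x, v⁆ ∈ V) {z : 𝔤}
    (hz : z ∈ V ⊔ Submodule.span ℝ (Set.image2 (⁅·, ·⁆) (V : Set 𝔤) V)) :
    ⁅x, z⁆ ∈ V ⊔ Submodule.span ℝ (Set.image2 (⁅·, ·⁆) (V : Set 𝔤) V) := by
  set X := V ⊔ Submodule.span ℝ (Set.image2 (⁅·, ·⁆) (V : Set 𝔤) V)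
  have hbr : ∀ v ∈ V, ∀ w ∈ V, ⁅v, w⁆ ∈ X := fun v hv w hw =>
    Submodule.mem_sup_right (Submodule.subset_span ⟨v, hv, w, hw, rfl⟩)
  suffices X ≤ X.comap (LieAlgebra.ad ℝ 𝔤 x) from this hz
  refine sup_le (fun v hv => Submodule.mem_sup_left (hx v hv)) (Submodule.span_le.mpr ?_)
  rintro _ ⟨v, hv, w, hw, rfl⟩
  simp only [SetLike.mem_coe, Submodule.mem_comap, LieAlgebra.ad_apply, leibniz_lie x v w]
  exact add_mem (hbr _ (hx v hv) w hw) (hbr v hv _ (hx w hw))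

theorem LieAlgebra.IsSimple.eq_bot_or_le_sup [LieAlgebra.IsSimple ℝ 𝔤]
    {𝔨 : LieSubalgebra ℝ 𝔤} (htop : 𝔨.toSubmodule ⊔ V ⊔ V' = ⊤) (hV : AdInvariant 𝔨 V)
    (hVV : ∀ v ∈ V, ∀ w ∈ V, ⁅v, w⁆ ∈ 𝔨.toSubmodule ⊔ V)
    (hV'V : ∀ w ∈ V', ∀ v ∈ V, ⁅w, v⁆ = 0) : V = ⊥ ∨ V' ≤ 𝔨.toSubmodule ⊔ V := by
  set X := V ⊔ Submodule.span ℝ (Set.image2 (⁅·, ·⁆) (V : Set 𝔤) V)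
  have hXle : X ≤ 𝔨.toSubmodule ⊔ V := sup_le le_sup_right <| Submodule.span_le.mpr <| by
    rintro _ ⟨v, hv, w, hw, rfl⟩
    exact hVV v hv w hw
  have hlie : ∀ x : 𝔤, ∀ z ∈ X, ⁅x, z⁆ ∈ X := by
    intro x z hz
    obtain ⟨y, hy, w, hw, rfl⟩ := Submodule.mem_sup.mp (htop ▸ Submodule.mem_top : x ∈ _)
    obtain ⟨k, hk, v, hv, rfl⟩ := Submodule.mem_sup.mp hy
    rw [add_lie, add_lie]
    refine add_mem (add_mem (lie_mem_sup_span_lie (hV k hk) hz) ?_)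
      (lie_mem_sup_span_lie (x := w) (fun u hu => by simp [hV'V w hw u hu]) hz)
    obtain ⟨k', hk', u, hu, rfl⟩ := Submodule.mem_sup.mp (hXle hz)
    rw [lie_add, ← lie_skew]
    exact add_mem (Submodule.mem_sup_left (neg_mem (hV k' hk' v hv)))
      (Submodule.mem_sup_right (Submodule.subset_span ⟨v, hv, u, hu, rfl⟩))
  let I : LieIdeal ℝ 𝔤 := { X with lie_mem := fun {x z} hz => hlie x z hz }
  rcases LieAlgebra.IsSimple.eq_bot_or_eq_top I with hI | hI
  · refine Or.inl (eq_bot_iff.mpr fun v hv => ?_)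
    have hvI : v ∈ I := Submodule.mem_sup_left hv
    rw [hI] at hvI
    exact (Submodule.mem_bot ℝ).mpr ((LieSubmodule.mem_bot v).mp hvI)
  · exact Or.inr fun u _ => hXle (hI ▸ LieSubmodule.mem_top u : u ∈ I)

end Brackets

section GeodesicOrbit

variable {k₁ : LieSubalgebra ℝ 𝔤} {n : Submodule ℝ 𝔤} {Λ : 𝔤 →ₗ[ℝ] 𝔤}

theorem IsGOMetric.killingForm_lie_self_eq_zero (hgo : IsGOMetric k₁ n Λ)
    (hΛn : Set.MapsTo Λ n n) {w : 𝔤} (hwk₁ : ∀ a ∈ k₁, killingForm ℝ 𝔤 a w = 0)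
    (hw : ∀ a ∈ k₁, ∀ x ∈ n, killingForm ℝ 𝔤 ⁅a, x⁆ w = 0) {x : 𝔤} (hx : x ∈ n) :
    killingForm ℝ 𝔤 ⁅x, Λ x⁆ w = 0 := by
  obtain ⟨a, ha, hax⟩ := hgo x hx
  have h := hwk₁ _ hax
  rwa [add_lie, map_add, LinearMap.add_apply, hw a ha _ (hΛn hx), zero_add] at h

theorem IsGOMetric.map_lie_of_orthogonal (hgo : IsGOMetric k₁ n Λ) (hΛn : Set.MapsTo Λ n n)
    (hΛsym : ∀ x ∈ n, ∀ y ∈ n, killingForm ℝ 𝔤 (Λ x) y = killingForm ℝ 𝔤 x (Λ y))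
    (hnd : ∀ x ∈ n, (∀ y ∈ n, killingForm ℝ 𝔤 x y = 0) → x = 0) {w : 𝔤}
    (hwn : ∀ x ∈ n, ⁅w, x⁆ ∈ n) (hwk₁ : ∀ a ∈ k₁, killingForm ℝ 𝔤 a w = 0)
    (hw : ∀ a ∈ k₁, ∀ x ∈ n, killingForm ℝ 𝔤 ⁅a, x⁆ w = 0) {y : 𝔤} (hy : y ∈ n) :
    Λ ⁅w, y⁆ = ⁅w, Λ y⁆ := by
  have hq := fun {x} (hx : x ∈ n) => hgo.killingForm_lie_self_eq_zero hΛn hwk₁ hw hx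
  refine sub_eq_zero.mp (hnd _ (sub_mem (hΛn (hwn y hy)) (hwn _ (hΛn hy))) fun x hx => ?_)
  have hpol := hq (add_mem hx hy)
  simp only [map_add, lie_add, add_lie, LinearMap.add_apply, hq hx, hq hy, zero_add,
    add_zero] at hpol
  have e1 : killingForm ℝ 𝔤 ⁅w, y⁆ (Λ x) = killingForm ℝ 𝔤 ⁅y, Λ x⁆ w := by
    rw [LieModule.traceForm_apply_lie_apply', LieModule.traceForm_apply_lie_apply,
      ← lie_skew w, map_neg, neg_neg]
  have e2 : killingForm ℝ 𝔤 ⁅w, Λ y⁆ x = -killingForm ℝ 𝔤 ⁅x, Λ y⁆ w := by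
    rw [LieModule.traceForm_apply_lie_apply, LieModule.traceForm_comm ℝ 𝔤 𝔤 ⁅x, Λ y⁆,
      ← lie_skew (Λ y) x, map_neg]
  rw [map_sub, LinearMap.sub_apply, hΛsym _ (hwn y hy) x hx, e1, e2]
  linarith

theorem IsGOMetric.adEquivariantOn_of_le [FiniteDimensional ℝ 𝔤] (hgo : IsGOMetric k₁ n Λ)
    (hΛn : Set.MapsTo Λ n n)
    (hΛsym : ∀ x ∈ n, ∀ y ∈ n, killingForm ℝ 𝔤 (Λ x) y = killingForm ℝ 𝔤 x (Λ y))
    (hnd : ∀ x ∈ n, (∀ y ∈ n, killingForm ℝ 𝔤 x y = 0) → x = 0)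
    (hk₁ : ∀ a ∈ k₁, killingForm ℝ 𝔤 a a = 0 → a = 0) {k : LieSubalgebra ℝ 𝔤} (hk₁k : k₁ ≤ k)
    (hkn : ∀ z ∈ k, ∀ x ∈ n, ⁅z, x⁆ ∈ n)
    (hk₁n : ∀ a ∈ k₁, ∀ x ∈ n, ∀ z ∈ k, killingForm ℝ 𝔤 ⁅a, x⁆ z = 0)
    (hΛ : AdEquivariantOn k₁ n Λ) : AdEquivariantOn k n Λ := by
  have hK : (killingForm ℝ 𝔤).IsRefl :=
    (LinearMap.BilinForm.isSymm_iff.mpr (LieModule.traceForm_isSymm ℝ 𝔤 𝔤)).isRefl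
  have hcompl := (LinearMap.BilinForm.isCompl_orthogonal_iff_disjoint hK).mpr <|
    Submodule.disjoint_def.mpr fun a ha ha' =>
      hk₁ a ha (LinearMap.BilinForm.mem_orthogonal_iff.mp ha' a ha)
  intro z hz y hy
  obtain ⟨a, ha, w, hw, rfl⟩ :=
    Submodule.mem_sup.mp (hcompl.sup_eq_top ▸ Submodule.mem_top : z ∈ _)
  have hwk : w ∈ k := by simpa using sub_mem hz (hk₁k ha)
  rw [add_lie, add_lie, map_add, hΛ a ha y hy, hgo.map_lie_of_orthogonal hΛn hΛsym hnd (hkn w hwk)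
    (fun b hb => LinearMap.BilinForm.mem_orthogonal_iff.mp hw b hb)
    (fun b hb x hx => hk₁n b hb x hx w hwk) hy]

theorem IsGOMetric.exists_lie_eq_smul_lie {k : LieSubalgebra ℝ 𝔤} {W : Submodule ℝ 𝔤}
    (hgo : IsGOMetric k₁ n Λ) (hk₁k : k₁ ≤ k) (hW : AdInvariant k W)
    (hWk : Disjoint W k.toSubmodule) (hWn : W ≤ n) {μ : ℝ} (hΛW : ∀ w ∈ W, Λ w = μ • w)
    {t : 𝔤} (htn : t ∈ n) (htk : t ∈ k) (hΛtk : Λ t ∈ k) (htΛt : ⁅t, Λ t⁆ = 0)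
    (hk₁Λt : ∀ a ∈ k₁, ⁅a, Λ t⁆ = 0) {v : 𝔤} (hv : v ∈ W) :
    ∃ a ∈ k₁, ⁅μ • t - Λ t, v⁆ = μ • ⁅a, v⁆ := by
  obtain ⟨a, ha, hmem⟩ := hgo (t + v) (add_mem htn (hWn hv))
  have hexp : ⁅a + (t + v), Λ (t + v)⁆ = μ • ⁅a, v⁆ + ⁅μ • t - Λ t, v⁆ := by
    rw [map_add, hΛW v hv, add_lie, add_lie, lie_add, lie_add, lie_add, hk₁Λt a ha, htΛt,
      lie_smul, lie_smul, lie_smul, lie_self, smul_zero, sub_lie, smul_lie, ← lie_skew (Λ t) v]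
    abel
  have hW' : ⁅a + (t + v), Λ (t + v)⁆ ∈ W := by
    rw [hexp]
    exact add_mem (W.smul_mem μ (hW a (hk₁k ha) v hv))
      (hW _ (sub_mem (k.smul_mem μ htk) hΛtk) v hv)
  have h0 := Submodule.disjoint_def.mp hWk _ hW' (hk₁k hmem)
  rw [hexp] at h0
  refine ⟨-a, neg_mem ha, ?_⟩
  rw [neg_lie, smul_neg]
  exact eq_neg_of_add_eq_zero_right h0

end GeodesicOrbit

section Decomposition

variable {𝔨 𝔨₁ 𝔰 : LieSubalgebra ℝ 𝔤} {𝔪 m₀ m₁ V W : Submodule ℝ 𝔤} {Λ : 𝔤 →ₗ[ℝ] 𝔤}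

theorem lie_mem_of_mem_centralizer (h𝔨cent : ∀ x : 𝔤, x ∈ 𝔨 ↔ ∀ s ∈ 𝔰, ⁅s, x⁆ = 0)
    (h𝔪inv : AdInvariant 𝔨 𝔪) {z x : 𝔤} (hz : z ∈ 𝔨) (hx : x ∈ 𝔰.toSubmodule ⊔ 𝔪) :
    ⁅z, x⁆ ∈ 𝔪 := by
  obtain ⟨σ, hσ, m, hm, rfl⟩ := Submodule.mem_sup.mp hx
  rw [lie_add, ← lie_skew z σ, (h𝔨cent z).mp hz σ hσ, neg_zero, zero_add]
  exact h𝔪inv z hz m hm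

theorem IsGOMetric.adEquivariantOn_centralizer [FiniteDimensional ℝ 𝔤]
    (hK : ∀ x : 𝔤, killingForm ℝ 𝔤 x x = 0 → x = 0)
    (h𝔨cent : ∀ x : 𝔤, x ∈ 𝔨 ↔ ∀ s ∈ 𝔰, ⁅s, x⁆ = 0) (h𝔨₁𝔨 : 𝔨₁ ≤ 𝔨)
    (h𝔪orth : ∀ x ∈ 𝔨, ∀ y ∈ 𝔪, killingForm ℝ 𝔤 x y = 0) (h𝔪inv : AdInvariant 𝔨 𝔪)
    (hgo : IsGOMetric 𝔨₁ (𝔰.toSubmodule ⊔ 𝔪) Λ)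
    (hΛn : Set.MapsTo Λ (𝔰.toSubmodule ⊔ 𝔪 : Submodule ℝ 𝔤) (𝔰.toSubmodule ⊔ 𝔪 : Submodule ℝ 𝔤))
    (hΛsym : ∀ x ∈ 𝔰.toSubmodule ⊔ 𝔪, ∀ y ∈ 𝔰.toSubmodule ⊔ 𝔪,
      killingForm ℝ 𝔤 (Λ x) y = killingForm ℝ 𝔤 x (Λ y))
    (hΛ : AdEquivariantOn 𝔨₁ (𝔰.toSubmodule ⊔ 𝔪) Λ) :
    AdEquivariantOn 𝔨 (𝔰.toSubmodule ⊔ 𝔪) Λ :=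
  hgo.adEquivariantOn_of_le hΛn hΛsym (fun x hx h => hK x (h x hx)) (fun a _ => hK a) h𝔨₁𝔨
    (fun z hz x hx => Submodule.mem_sup_right (lie_mem_of_mem_centralizer h𝔨cent h𝔪inv hz hx))
    (fun a ha x hx z hz => by
      rw [LieModule.traceForm_comm]
      exact h𝔪orth z hz _ (lie_mem_of_mem_centralizer h𝔨cent h𝔪inv (h𝔨₁𝔨 ha) hx))
    hΛ

theorem mapsTo_torus_and_mapsTo_complement (hK : ∀ x : 𝔤, killingForm ℝ 𝔤 x x = 0 → x = 0)
    (h𝔨cent : ∀ x : 𝔤, x ∈ 𝔨 ↔ ∀ s ∈ 𝔰, ⁅s, x⁆ = 0)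
    (h𝔰𝔨 : 𝔰 ≤ 𝔨) (h𝔪orth : ∀ x ∈ 𝔨, ∀ y ∈ 𝔪, killingForm ℝ 𝔤 x y = 0)
    (hΛn : Set.MapsTo Λ (𝔰.toSubmodule ⊔ 𝔪 : Submodule ℝ 𝔤) (𝔰.toSubmodule ⊔ 𝔪 : Submodule ℝ 𝔤))
    (hΛsym : ∀ x ∈ 𝔰.toSubmodule ⊔ 𝔪, ∀ y ∈ 𝔰.toSubmodule ⊔ 𝔪,
      killingForm ℝ 𝔤 (Λ x) y = killingForm ℝ 𝔤 x (Λ y))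
    (hΛ : AdEquivariantOn 𝔰 (𝔰.toSubmodule ⊔ 𝔪) Λ) :
    Set.MapsTo Λ 𝔰 𝔰 ∧ Set.MapsTo Λ 𝔪 𝔪 := by
  have hΛ𝔰 : Set.MapsTo Λ 𝔰 𝔰 := fun s hs => by
    have hΛs𝔨 : Λ s ∈ 𝔨 := (h𝔨cent _).mpr fun s' hs' => by
      rw [← hΛ s' hs' s (Submodule.mem_sup_left hs), (h𝔨cent s).mp (h𝔰𝔨 hs) s' hs', map_zero]
    refine LinearMap.BilinForm.mem_right_of_mem_sup_of_orthogonal (A := 𝔪)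
      (fun x _ => hK x) (fun m hm σ hσ => h𝔪orth σ (h𝔰𝔨 hσ) m hm) ?_
      (fun m hm => h𝔪orth _ hΛs𝔨 m hm)
    rw [sup_comm]
    exact hΛn (Submodule.mem_sup_left hs)
  refine ⟨hΛ𝔰, LinearMap.BilinForm.mapsTo_right_of_mapsTo_left (fun x _ => hK x)
    (fun σ hσ m hm => ?_) hΛ𝔰 (fun m hm => hΛn (Submodule.mem_sup_right hm))
    (fun m hm σ hσ => hΛsym m (Submodule.mem_sup_right hm) σ (Submodule.mem_sup_left hσ))⟩
  rw [LieModule.traceForm_comm]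
  exact h𝔪orth σ (h𝔰𝔨 hσ) m hm

theorem mapsTo_summands_of_not_adEquiv [FiniteDimensional ℝ 𝔤]
    (hK : ∀ x : 𝔤, killingForm ℝ 𝔤 x x = 0 → x = 0)
    (h𝔪compl : IsCompl 𝔨.toSubmodule (m₀ ⊔ m₁))
    (h𝔪orth : ∀ x ∈ 𝔨, ∀ y ∈ m₀ ⊔ m₁, killingForm ℝ 𝔤 x y = 0)
    (hmorth : ∀ x ∈ m₀, ∀ y ∈ m₁, killingForm ℝ 𝔤 x y = 0)
    (hm₀ : AdIrreducible 𝔨 m₀) (hm₁ : AdIrreducible 𝔨 m₁) (hmineq : ¬ AdEquiv 𝔨 m₀ m₁)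
    (hΛm : Set.MapsTo Λ (m₀ ⊔ m₁ : Submodule ℝ 𝔤) (m₀ ⊔ m₁ : Submodule ℝ 𝔤))
    (hΛsym : ∀ x ∈ m₀ ⊔ m₁, ∀ y ∈ m₀ ⊔ m₁, killingForm ℝ 𝔤 (Λ x) y = killingForm ℝ 𝔤 x (Λ y))
    (hΛ : AdEquivariantOn 𝔨 m₀ Λ) :
    Set.MapsTo Λ m₀ m₀ ∧ Set.MapsTo Λ m₁ m₁ := by
  have hdisj : Disjoint m₀ m₁ :=
    Submodule.disjoint_def.mpr fun x h₀ h₁ => hK x (hmorth x h₀ x h₁)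
  have hcompl : IsCompl m₁ (𝔨.toSubmodule ⊔ m₀) :=
    (hdisj.isCompl_sup_left_of_isCompl_sup_right h𝔪compl).symm
  have hP : AdInvariant 𝔨 (𝔨.toSubmodule ⊔ m₀) := by
    intro x hx z hz
    obtain ⟨k, hk, u, hu, rfl⟩ := Submodule.mem_sup.mp hz
    rw [lie_add]
    exact add_mem (Submodule.mem_sup_left (𝔨.lie_mem hx hk))
      (Submodule.mem_sup_right (hm₀.1 x hx u hu))
  have hΛ₀ : Set.MapsTo Λ m₀ m₀ := fun u hu =>
    LinearMap.BilinForm.mem_right_of_mem_sup_of_orthogonal (A := 𝔨.toSubmodule)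
      (fun x _ => hK x)
      (fun k hk u' hu' => by
        rw [LieModule.traceForm_comm]
        exact h𝔪orth k hk u' (Submodule.mem_sup_left hu'))
      (hm₀.mapsTo_of_not_adEquiv hm₁ hmineq hP hcompl hΛ hu)
      (fun k hk => by
        rw [LieModule.traceForm_comm]
        exact h𝔪orth k hk _ (hΛm (Submodule.mem_sup_left hu)))
  refine ⟨hΛ₀, LinearMap.BilinForm.mapsTo_right_of_mapsTo_left (fun x _ => hK x)
    (fun u hu v hv => ?_) hΛ₀ (fun v hv => hΛm (Submodule.mem_sup_right hv))
    (fun v hv u hu => hΛsym v (Submodule.mem_sup_right hv) u (Submodule.mem_sup_left hu))⟩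
  rw [LieModule.traceForm_comm]
  exact hmorth u hu v hv

theorem lie_mem_of_orthogonal (hK : ∀ x : 𝔤, killingForm ℝ 𝔤 x x = 0 → x = 0)
    (hcompl : IsCompl 𝔨.toSubmodule 𝔪) (horth : ∀ x ∈ 𝔨, ∀ y ∈ 𝔪, killingForm ℝ 𝔤 x y = 0)
    (hW : AdInvariant 𝔨 W) (hVW : ∀ x ∈ V, ∀ y ∈ W, killingForm ℝ 𝔤 x y = 0) {v w : 𝔤}
    (hv : v ∈ V) (hw : w ∈ W) : ⁅v, w⁆ ∈ 𝔪 :=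
  LinearMap.BilinForm.mem_right_of_mem_sup_of_orthogonal (A := 𝔨.toSubmodule) (fun x _ => hK x)
    (fun k hk m hm => by
      rw [LieModule.traceForm_comm]
      exact horth k hk m hm)
    (hcompl.sup_eq_top ▸ Submodule.mem_top)
    (fun k hk => by
      rw [LieModule.traceForm_apply_lie_apply, ← lie_skew, map_neg, hVW v hv _ (hW k hk w hw),
        neg_zero])

theorem LieAlgebra.IsSimple.exists_lie_ne_zero [LieAlgebra.IsSimple ℝ 𝔤]
    (hK : ∀ x : 𝔤, killingForm ℝ 𝔤 x x = 0 → x = 0)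
    (hcompl : IsCompl 𝔨.toSubmodule (V ⊔ W))
    (horth : ∀ x ∈ 𝔨, ∀ y ∈ V ⊔ W, killingForm ℝ 𝔤 x y = 0)
    (hVW : ∀ x ∈ V, ∀ y ∈ W, killingForm ℝ 𝔤 x y = 0) (hV : AdInvariant 𝔨 V) (hV0 : V ≠ ⊥)
    (hW0 : W ≠ ⊥) : ∃ v ∈ V, ∃ w ∈ W, ⁅v, w⁆ ≠ 0 := by
  by_contra! hVW0
  have htop : 𝔨.toSubmodule ⊔ V ⊔ W = ⊤ := by rw [sup_assoc]; exact hcompl.sup_eq_top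
  have hW𝔨V : ∀ w ∈ W, ∀ c ∈ 𝔨.toSubmodule ⊔ V, killingForm ℝ 𝔤 c w = 0 := by
    intro w hw c hc
    obtain ⟨k, hk, v, hv, rfl⟩ := Submodule.mem_sup.mp hc
    rw [map_add, LinearMap.add_apply, horth k hk w (Submodule.mem_sup_right hw),
      hVW v hv w hw, add_zero]
  have hVV : ∀ v ∈ V, ∀ v' ∈ V, ⁅v, v'⁆ ∈ 𝔨.toSubmodule ⊔ V := fun v hv v' hv' =>
    LinearMap.BilinForm.mem_right_of_mem_sup_of_orthogonal (A := W) (fun x _ => hK x) hW𝔨V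
      (by rw [sup_comm, htop]; exact Submodule.mem_top)
      (fun w hw => by rw [LieModule.traceForm_apply_lie_apply, hVW0 v' hv' w hw, map_zero])
  rcases LieAlgebra.IsSimple.eq_bot_or_le_sup htop hV hVV
    (fun w hw v hv => by rw [← lie_skew, hVW0 v hv w hw, neg_zero]) with h | h
  · exact hV0 h
  · exact hW0 (eq_bot_iff.mpr fun w hw => (Submodule.mem_bot ℝ).mpr (hK w (hW𝔨V w hw w (h hw))))

theorem eq_zero_of_lie_eq_zero [LieAlgebra.IsSimple ℝ 𝔤] [FiniteDimensional ℝ 𝔤]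
    (hK : ∀ x : 𝔤, x ≠ 0 → killingForm ℝ 𝔤 x x < 0)
    (h𝔨cent : ∀ x : 𝔤, x ∈ 𝔨 ↔ ∀ s ∈ 𝔰, ⁅s, x⁆ = 0) (h𝔰𝔨 : 𝔰 ≤ 𝔨)
    (hcompl : IsCompl 𝔨.toSubmodule (V ⊔ W))
    (horth : ∀ x ∈ 𝔨, ∀ y ∈ V ⊔ W, killingForm ℝ 𝔤 x y = 0)
    (hVW : ∀ x ∈ V, ∀ y ∈ W, killingForm ℝ 𝔤 x y = 0) (hV : AdIrreducible 𝔨 V)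
    (hW : AdIrreducible 𝔨 W) {b : 𝔤} (hb : b ∈ 𝔰) (hbV : ∀ v ∈ V, ⁅b, v⁆ = 0) : b = 0 := by
  have hK0 : ∀ x : 𝔤, killingForm ℝ 𝔤 x x = 0 → x = 0 := fun x hx =>
    by_contra fun h => (hK x h).ne hx
  have hcentral : ∀ s ∈ 𝔰, ∀ x ∈ 𝔨, ⁅s, x⁆ = 0 := fun s hs x hx => (h𝔨cent x).mp hx s hs
  by_contra hb0
  obtain ⟨w₀, hw₀, hbw₀⟩ : ∃ w ∈ W, ⁅b, w⁆ ≠ 0 := by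
    by_contra! hbW
    have hbc : b ∈ LieAlgebra.center ℝ 𝔤 := fun y => by
      obtain ⟨k, hk, z, hz, rfl⟩ :=
        Submodule.mem_sup.mp (hcompl.sup_eq_top ▸ Submodule.mem_top : y ∈ _)
      obtain ⟨v, hv, w, hw, rfl⟩ := Submodule.mem_sup.mp hz
      rw [← lie_skew, lie_add, lie_add, hcentral b hb k hk, hbV v hv, hbW w hw, add_zero,
        add_zero, neg_zero]
    rw [LieAlgebra.center_eq_bot] at hbc
    exact hb0 hbc
  obtain ⟨s, hs, v₀, hv₀, hsv₀⟩ : ∃ s ∈ 𝔰, ∃ v ∈ V, ⁅s, v⁆ ≠ 0 := by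
    by_contra! h
    obtain ⟨v, hv, hv0⟩ := Submodule.exists_mem_ne_zero_of_ne_bot hV.2.1
    exact hv0 (Submodule.disjoint_def.mp hcompl.disjoint v
      ((h𝔨cent v).mpr fun s hs => h s hs v hv) (Submodule.mem_sup_left hv))
  obtain ⟨ρ, hρ⟩ := hW.exists_lie_eq_smul_lie (fun w _ => hK w) (h𝔰𝔨 hb) (h𝔰𝔨 hs)
    (hcentral b hb) (hcentral s hs) hw₀ hbw₀
  -- `b` and `t` separate `V` from `W`, which forces `[V, W] = 0`
  set t := s - ρ • b
  have ht : t ∈ 𝔰 := sub_mem hs (𝔰.smul_mem ρ hb)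
  have htW : ∀ w ∈ W, ⁅t, w⁆ = 0 := fun w hw => by rw [sub_lie, smul_lie, hρ w hw, sub_self]
  have htv₀ : ⁅t, v₀⁆ ≠ 0 := by rwa [sub_lie, smul_lie, hbV v₀ hv₀, smul_zero, sub_zero]
  obtain ⟨v, hv, w, hw, hvw⟩ :=
    LieAlgebra.IsSimple.exists_lie_ne_zero hK0 hcompl horth hVW hV.1 hV.2.1 hW.2.1
  refine hvw (lie_eq_zero_of_surjOn
    (Submodule.disjoint_def.mpr fun x hxV hxW => hK0 x (hVW x hxV x hxW))
    (fun v hv w hw => lie_mem_of_orthogonal hK0 hcompl horth hW.1 hVW hv hw) hbV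
    (hW.1 b (h𝔰𝔨 hb))
    (hW.surjOn (hW.1 b (h𝔰𝔨 hb)) (adEquivariantOn_ad (hcentral b hb) W) hw₀ hbw₀)
    htW (hV.1 t (h𝔰𝔨 ht))
    (hV.surjOn (hV.1 t (h𝔰𝔨 ht)) (adEquivariantOn_ad (hcentral t ht) V) hv₀ htv₀) hv hw)

theorem IsGOMetric.eq_smul_of_mem_torus [LieAlgebra.IsSimple ℝ 𝔤] [FiniteDimensional ℝ 𝔤]
    (hK : ∀ x : 𝔤, x ≠ 0 → killingForm ℝ 𝔤 x x < 0)
    (h𝔨cent : ∀ x : 𝔤, x ∈ 𝔨 ↔ ∀ s ∈ 𝔰, ⁅s, x⁆ = 0) (h𝔰𝔨 : 𝔰 ≤ 𝔨) (h𝔨₁𝔨 : 𝔨₁ ≤ 𝔨)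
    (h𝔨sum : 𝔰.toSubmodule ⊔ 𝔨₁.toSubmodule = 𝔨.toSubmodule)
    (hcompl : IsCompl 𝔨.toSubmodule (V ⊔ W))
    (horth : ∀ x ∈ 𝔨, ∀ y ∈ V ⊔ W, killingForm ℝ 𝔤 x y = 0)
    (hVW : ∀ x ∈ V, ∀ y ∈ W, killingForm ℝ 𝔤 x y = 0) (hV : AdIrreducible 𝔨 V)
    (hW : AdIrreducible 𝔨 W) (hred : AdReducible 𝔨₁ V)
    (hgo : IsGOMetric 𝔨₁ (𝔰.toSubmodule ⊔ (V ⊔ W)) Λ) (hΛ𝔰 : Set.MapsTo Λ 𝔰 𝔰) {μ : ℝ}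
    (hΛV : ∀ v ∈ V, Λ v = μ • v) {s : 𝔤} (hs : s ∈ 𝔰) : Λ s = μ • s := by
  have hcentral : ∀ s ∈ 𝔰, ∀ x ∈ 𝔨, ⁅s, x⁆ = 0 := fun s hs x hx => (h𝔨cent x).mp hx s hs
  have hΛs : Λ s ∈ 𝔰 := hΛ𝔰 hs
  have hb : μ • s - Λ s ∈ 𝔰 := sub_mem (𝔰.smul_mem μ hs) hΛs
  have hbV := hred.lie_eq_zero (fun v _ => hK v) h𝔨sum hcentral hV hb fun U hUV hU u hu => by
    obtain ⟨a, ha, h⟩ := hgo.exists_lie_eq_smul_lie h𝔨₁𝔨 hV.1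
      (hcompl.disjoint.mono_right le_sup_left).symm (le_sup_left.trans le_sup_right) hΛV
      (Submodule.mem_sup_left hs) (h𝔰𝔨 hs) (h𝔰𝔨 hΛs) (hcentral s hs _ (h𝔰𝔨 hΛs))
      (fun a ha => by rw [← lie_skew, hcentral _ hΛs a (h𝔨₁𝔨 ha), neg_zero]) (hUV hu)
    rw [h]
    exact U.smul_mem μ (hU a ha u hu)
  exact (sub_eq_zero.mp (eq_zero_of_lie_eq_zero hK h𝔨cent h𝔰𝔨 hcompl horth hVW hV hW hb hbV)).symm

end Decomposition

end LieAlgebra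

theorem goMetric_of_two_summands_one_reducible_general
    {𝔤 : Type*} [LieRing 𝔤] [LieAlgebra ℝ 𝔤] [FiniteDimensional ℝ 𝔤]
    -- `G` is a compact simple Lie group: `𝔤` is simple with negative definite Killing form
    [LieAlgebra.IsSimple ℝ 𝔤]
    (hcompact : ∀ x : 𝔤, x ≠ 0 → killingForm ℝ 𝔤 x x < 0)
    (𝔨 𝔨₁ 𝔰 : LieSubalgebra ℝ 𝔤)
    -- `S` is a torus in `G` and `K = C(S)` is its centralizer
    (h𝔨cent : ∀ x : 𝔤, x ∈ 𝔨 ↔ ∀ s ∈ 𝔰, ⁅s, x⁆ = 0)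
    -- `K = S × K₁`, `K₁` being the semisimple part of `K`
    (h𝔰𝔨 : 𝔰 ≤ 𝔨) (h𝔨₁𝔨 : 𝔨₁ ≤ 𝔨)
    (h𝔨sum : 𝔰.toSubmodule ⊔ 𝔨₁.toSubmodule = 𝔨.toSubmodule)
    -- the `B`-orthogonal reductive decomposition `𝔤 = 𝔨 ⊕ 𝔪`, where `B = -Killing form`
    (𝔪 : Submodule ℝ 𝔤)
    (h𝔪compl : IsCompl 𝔨.toSubmodule 𝔪)
    (h𝔪orth : ∀ x ∈ 𝔨, ∀ y ∈ 𝔪, killingForm ℝ 𝔤 x y = 0)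
    (h𝔪inv : AdInvariant 𝔨 𝔪)
    -- the decomposition `𝔪 = 𝔪₁ ⊕ 𝔪₂`, `B`-orthogonal, into two pairwise inequivalent
    -- irreducible `Ad(K)`-submodules, with the convention `[𝔪 0, 𝔪 0] ⊆ 𝔨 ⊕ 𝔪 1`
    (m : Fin 2 → Submodule ℝ 𝔤)
    (hmsub : ∀ i, m i ≤ 𝔪)
    (hmsum : m 0 ⊔ m 1 = 𝔪)
    (hmorth : ∀ x ∈ m 0, ∀ y ∈ m 1, killingForm ℝ 𝔤 x y = 0)
    (hmirr : ∀ i, AdIrreducible 𝔨 (m i))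
    (hmineq : ¬ AdEquiv 𝔨 (m 0) (m 1))
    -- `𝔪ⱼ` is reducible and `𝔪ᵢ` is irreducible as `Ad(K₁)`-modules
    (j i : Fin 2) (hij : i ≠ j)
    (hred : AdReducible 𝔨₁ (m j))
    -- `Λ` is the associated operator of the `G`-invariant metric `g` on the `M`-space
    -- `G/K₁`, whose tangent space at the origin is `𝔫 = 𝔰 ⊕ 𝔪`:
    -- positive definite, symmetric w.r.t. `B = -Killing`, and `Ad(K₁)`-equivariant
    (Λ : 𝔤 →ₗ[ℝ] 𝔤)
    (hΛ𝔫 : ∀ x ∈ 𝔰.toSubmodule ⊔ 𝔪, Λ x ∈ 𝔰.toSubmodule ⊔ 𝔪)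
    (hΛsym : ∀ x ∈ 𝔰.toSubmodule ⊔ 𝔪, ∀ y ∈ 𝔰.toSubmodule ⊔ 𝔪,
      killingForm ℝ 𝔤 (Λ x) y = killingForm ℝ 𝔤 x (Λ y))
    (hΛpos : ∀ x ∈ 𝔰.toSubmodule ⊔ 𝔪, x ≠ 0 → 0 < -(killingForm ℝ 𝔤 (Λ x) x))
    (hΛequiv : ∀ k ∈ 𝔨₁, ∀ x ∈ 𝔰.toSubmodule ⊔ 𝔪, Λ ⁅k, x⁆ = ⁅k, Λ x⁆)
    -- `(G/K₁, g)` is a g.o. space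
    (hgo : IsGOMetric 𝔨₁ (𝔰.toSubmodule ⊔ 𝔪) Λ) :
    ∃ μ μᵢ : ℝ, 0 < μ ∧ 0 < μᵢ ∧
      (∀ x ∈ 𝔰.toSubmodule ⊔ m j, Λ x = μ • x) ∧
      (∀ x ∈ m i, Λ x = μᵢ • x) := by
  have hK0 : ∀ x : 𝔤, killingForm ℝ 𝔤 x x = 0 → x = 0 := fun x hx =>
    by_contra fun h => (hcompact x h).ne hx
  subst hmsum
  have hΛ𝔨 := hgo.adEquivariantOn_centralizer hK0 h𝔨cent h𝔨₁𝔨 h𝔪orth h𝔪inv hΛ𝔫 hΛsym hΛequiv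
  obtain ⟨hΛ𝔰, hΛ𝔪⟩ := mapsTo_torus_and_mapsTo_complement hK0 h𝔨cent h𝔰𝔨 h𝔪orth hΛ𝔫
    hΛsym fun s hs => hΛ𝔨 s (h𝔰𝔨 hs)
  have hΛsym𝔪 := fun x hx y hy =>
    hΛsym x (Submodule.mem_sup_right hx) y (Submodule.mem_sup_right hy)
  obtain ⟨hΛm₀, hΛm₁⟩ := mapsTo_summands_of_not_adEquiv hK0 h𝔪compl h𝔪orth hmorth
    (hmirr 0) (hmirr 1) hmineq hΛ𝔪 hΛsym𝔪
    fun z hz u hu => hΛ𝔨 z hz u (Submodule.mem_sup_right (Submodule.mem_sup_left hu))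
  have hscalar : ∀ k, ∃ μ : ℝ, 0 < μ ∧ ∀ u ∈ m k, Λ u = μ • u := fun k =>
    (hmirr k).exists_pos_eq_smul_of_isSymm
      (LinearMap.BilinForm.isSymm_iff.mpr (LieModule.traceForm_isSymm ℝ 𝔤 𝔤))
      (fun w _ hw => hcompact w hw) (by fin_cases k; exacts [hΛm₀, hΛm₁])
      (fun x hx y hy => hΛsym𝔪 x (hmsub k hx) y (hmsub k hy))
      (fun z hz u hu => hΛ𝔨 z hz u (Submodule.mem_sup_right (hmsub k hu)))
      (fun u hu hu0 => hΛpos u (Submodule.mem_sup_right (hmsub k hu)) hu0)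
  obtain ⟨μ, hμ, hΛj⟩ := hscalar j
  obtain ⟨μᵢ, hμᵢ, hΛi⟩ := hscalar i
  obtain ⟨hji, hmorthji⟩ : m j ⊔ m i = m 0 ⊔ m 1 ∧
      ∀ x ∈ m j, ∀ y ∈ m i, killingForm ℝ 𝔤 x y = 0 := by
    obtain ⟨rfl, rfl⟩ | ⟨rfl, rfl⟩ : (j = 0 ∧ i = 1) ∨ (j = 1 ∧ i = 0) := by omega
    · exact ⟨rfl, hmorth⟩
    · exact ⟨sup_comm _ _, fun x hx y hy =>
        (LieModule.traceForm_comm ℝ 𝔤 𝔤 x y).trans (hmorth y hy x hx)⟩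
  rw [← hji] at h𝔪compl h𝔪orth hgo
  refine ⟨μ, μᵢ, hμ, hμᵢ, fun x hx => ?_, hΛi⟩
  obtain ⟨s, hs, v, hv, rfl⟩ := Submodule.mem_sup.mp hx
  rw [map_add, hgo.eq_smul_of_mem_torus hcompact h𝔨cent h𝔰𝔨 h𝔨₁𝔨 h𝔨sum h𝔪compl h𝔪orth hmorthji
    (hmirr j) (hmirr i) hred hΛ𝔰 hΛj hs, hΛj v hv, smul_add]

/-- **Theorem 2, part 2)** (Arvanitoyeorgos–Wang–Zhao).
Let `G/K` be a generalized flag manifold with two isotropy summands `𝔪 = 𝔪₁ ⊕ 𝔪₂`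
(with `[𝔪₁, 𝔪₁] ⊆ 𝔨 ⊕ 𝔪₂`) and `G/K₁` the corresponding `M`-space.  Suppose `𝔪ⱼ` is
reducible and `𝔪ᵢ` (`i ≠ j`) is irreducible as `Ad(K₁)`-modules.  If `(G/K₁, g)` is a
g.o. space then `g = μ B(·,·)|_{𝔰 ⊕ 𝔪ⱼ} + μᵢ B(·,·)|_{𝔪ᵢ}` for some `μ, μᵢ > 0`. -/
theorem goMetric_of_two_summands_one_reducible
    {𝔤 : Type*} [LieRing 𝔤] [LieAlgebra ℝ 𝔤] [FiniteDimensional ℝ 𝔤]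
    -- `G` is a compact simple Lie group: `𝔤` is simple with negative definite Killing form
    [LieAlgebra.IsSimple ℝ 𝔤]
    (hcompact : ∀ x : 𝔤, x ≠ 0 → killingForm ℝ 𝔤 x x < 0)
    (𝔨 𝔨₁ 𝔰 : LieSubalgebra ℝ 𝔤)
    -- `S` is a torus in `G` and `K = C(S)` is its centralizer
    (h𝔰ab : ∀ x ∈ 𝔰, ∀ y ∈ 𝔰, ⁅x, y⁆ = (0 : 𝔤))
    (h𝔨cent : ∀ x : 𝔤, x ∈ 𝔨 ↔ ∀ s ∈ 𝔰, ⁅s, x⁆ = 0)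
    -- `K = S × K₁`, `K₁` being the semisimple part of `K`
    (h𝔰𝔨 : 𝔰 ≤ 𝔨) (h𝔨₁𝔨 : 𝔨₁ ≤ 𝔨)
    (h𝔨sum : 𝔰.toSubmodule ⊔ 𝔨₁.toSubmodule = 𝔨.toSubmodule)
    (h𝔨disj : Disjoint 𝔰.toSubmodule 𝔨₁.toSubmodule)
    (h𝔰𝔨₁ : ∀ s ∈ 𝔰, ∀ k ∈ 𝔨₁, ⁅s, k⁆ = (0 : 𝔤))
    (hder : ∀ x ∈ 𝔨, ∀ y ∈ 𝔨, ⁅x, y⁆ ∈ 𝔨₁)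
    -- the `B`-orthogonal reductive decomposition `𝔤 = 𝔨 ⊕ 𝔪`, where `B = -Killing form`
    (𝔪 : Submodule ℝ 𝔤)
    (h𝔪compl : IsCompl 𝔨.toSubmodule 𝔪)
    (h𝔪orth : ∀ x ∈ 𝔨, ∀ y ∈ 𝔪, killingForm ℝ 𝔤 x y = 0)
    (h𝔪inv : AdInvariant 𝔨 𝔪)
    -- the decomposition `𝔪 = 𝔪₁ ⊕ 𝔪₂`, `B`-orthogonal, into two pairwise inequivalent
    -- irreducible `Ad(K)`-submodules, with the convention `[𝔪 0, 𝔪 0] ⊆ 𝔨 ⊕ 𝔪 1`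
    (m : Fin 2 → Submodule ℝ 𝔤)
    (hmsub : ∀ i, m i ≤ 𝔪)
    (hmsum : m 0 ⊔ m 1 = 𝔪)
    (hmorth : ∀ x ∈ m 0, ∀ y ∈ m 1, killingForm ℝ 𝔤 x y = 0)
    (hmirr : ∀ i, AdIrreducible 𝔨 (m i))
    (hmineq : ¬ AdEquiv 𝔨 (m 0) (m 1))
    (hconv : ∀ x ∈ m 0, ∀ y ∈ m 0, ⁅x, y⁆ ∈ 𝔨.toSubmodule ⊔ m 1)
    -- `𝔪ⱼ` is reducible and `𝔪ᵢ` is irreducible as `Ad(K₁)`-modules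
    (j i : Fin 2) (hij : i ≠ j)
    (hred : AdReducible 𝔨₁ (m j))
    (hirr : AdIrreducible 𝔨₁ (m i))
    -- `Λ` is the associated operator of the `G`-invariant metric `g` on the `M`-space
    -- `G/K₁`, whose tangent space at the origin is `𝔫 = 𝔰 ⊕ 𝔪`:
    -- positive definite, symmetric w.r.t. `B = -Killing`, and `Ad(K₁)`-equivariant
    (Λ : 𝔤 →ₗ[ℝ] 𝔤)
    (hΛ𝔫 : ∀ x ∈ 𝔰.toSubmodule ⊔ 𝔪, Λ x ∈ 𝔰.toSubmodule ⊔ 𝔪)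
    (hΛsym : ∀ x ∈ 𝔰.toSubmodule ⊔ 𝔪, ∀ y ∈ 𝔰.toSubmodule ⊔ 𝔪,
      killingForm ℝ 𝔤 (Λ x) y = killingForm ℝ 𝔤 x (Λ y))
    (hΛpos : ∀ x ∈ 𝔰.toSubmodule ⊔ 𝔪, x ≠ 0 → 0 < -(killingForm ℝ 𝔤 (Λ x) x))
    (hΛequiv : ∀ k ∈ 𝔨₁, ∀ x ∈ 𝔰.toSubmodule ⊔ 𝔪, Λ ⁅k, x⁆ = ⁅k, Λ x⁆)
    -- `(G/K₁, g)` is a g.o. space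
    (hgo : IsGOMetric 𝔨₁ (𝔰.toSubmodule ⊔ 𝔪) Λ) :
    ∃ μ μᵢ : ℝ, 0 < μ ∧ 0 < μᵢ ∧
      (∀ x ∈ 𝔰.toSubmodule ⊔ m j, Λ x = μ • x) ∧
      (∀ x ∈ m i, Λ x = μᵢ • x) :=
  goMetric_of_two_summands_one_reducible_general hcompact 𝔨 𝔨₁ 𝔰 h𝔨cent h𝔰𝔨 h𝔨₁𝔨 h𝔨sum 𝔪 h𝔪compl
    h𝔪orth h𝔪inv m hmsub hmsum hmorth hmirr hmineq j i hij hred Λ hΛ𝔫 hΛsym hΛpos hΛequiv hgo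
end

section
/- Let G/K be a generalized flag manifold with exactly two isotropy summands 𝔪 = 𝔪₁ ⊕ 𝔪₂ (with the convention [𝔪₁, 𝔪₁] ⊆ 𝔨 ⊕ 𝔪₂), and let G/K₁ be the corresponding M-space. If both 𝔪₁ and 𝔪₂ are reducible as Ad(K₁)-modules, then (G/K₁, g) is a g.o. space if and only if g is the standard metric. -/
open Module

/-!
The g.o. condition gives, for every `x ∈ 𝔫`, some `a ∈ 𝔨₁` with `[a + x, Λ x] ∈ 𝔨₁`. Pairing this
with `t ∈ 𝔨 ⊖ 𝔨₁` under `B` and polarizing shows that `Λ` commutes with all of `ad 𝔨`, not only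
with `ad 𝔨₁`. By Schur's lemma `Λ` then preserves `𝔰` and is a scalar `cᵢ` on each of the
inequivalent irreducible modules `𝔪ᵢ`. For two summands `𝔰 = ℝ z` is a line: simplicity of `𝔤` and
`[𝔪₁, 𝔪₁] ⊆ 𝔨 ⊕ 𝔪₂` make `𝔰` act faithfully on some `𝔪ᵢ`, and there all of `𝔰` acts through
multiples of one operator. Write `Λ z = σ z`. The g.o. condition at `z + u`, for `u` in a proper
`𝔨₁`-submodule `U ⊂ 𝔪ᵢ`, gives `(cᵢ - σ) [z, u] ∈ U`; as `U` is not invariant under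
`𝔨 = ℝ z ⊕ 𝔨₁`, this forces `σ = cᵢ`. Conversely, for `Λ = c · id` one can take `a = 0`.
-/
open LieAlgebra LieModule

lemma lie_lie_comm_of_lie_eq_zero {𝔤 : Type*} [LieRing 𝔤] {x y : 𝔤} (h : ⁅x, y⁆ = 0) (u : 𝔤) :
    ⁅x, ⁅y, u⁆⁆ = ⁅y, ⁅x, u⁆⁆ := by
  rw [leibniz_lie, h, zero_lie, zero_add]

section AdModules

variable {𝔤 : Type*} [LieRing 𝔤] [LieAlgebra ℝ 𝔤] {k : LieSubalgebra ℝ 𝔤}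
  {m p q : Submodule ℝ 𝔤} {T : 𝔤 →ₗ[ℝ] 𝔤}

lemma AdInvariant.inf_ker_s4 (hm : AdInvariant k m)
    (hT : ∀ c ∈ k, ∀ u ∈ m, T ⁅c, u⁆ = ⁅c, T u⁆) : AdInvariant k (m ⊓ LinearMap.ker T) := by
  rintro c hc u ⟨hum, huT⟩
  refine ⟨hm c hc u hum, ?_⟩
  change T u = 0 at huT
  change T ⁅c, u⁆ = 0
  rw [hT c hc u hum, huT, lie_zero]

lemma AdInvariant.map (hm : AdInvariant k m) (hT : ∀ c ∈ k, ∀ u ∈ m, T ⁅c, u⁆ = ⁅c, T u⁆) :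
    AdInvariant k (m.map T) := by
  rintro c hc _ ⟨u, hu, rfl⟩
  exact ⟨⁅c, u⁆, hm c hc u hu, hT c hc u hu⟩

lemma AdInvariant.projection_lie (hpq : IsCompl p q) (hp : AdInvariant k p)
    (hq : AdInvariant k q) {c : 𝔤} (hc : c ∈ k) (x : 𝔤) :
    p.projection q hpq ⁅c, x⁆ = ⁅c, p.projection q hpq x⁆ := by
  obtain ⟨a, ha, b, hb, rfl⟩ := Submodule.mem_sup.mp (hpq.sup_eq_top ▸ Submodule.mem_top (x := x))
  rw [lie_add, map_add, map_add, Submodule.projection_apply_of_mem_left hpq (hp c hc a ha),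
    Submodule.projection_apply_of_mem_right hpq (hq c hc b hb),
    Submodule.projection_apply_of_mem_left hpq ha, Submodule.projection_apply_of_mem_right hpq hb,
    add_zero, add_zero]

lemma ad_lie_of_forall_lie_eq_zero {z : 𝔤} (hz : ∀ c ∈ k, ⁅z, c⁆ = 0) :
    ∀ c ∈ k, ∀ u ∈ m, ad ℝ 𝔤 z ⁅c, u⁆ = ⁅c, ad ℝ 𝔤 z u⁆ :=
  fun c hc u _ => lie_lie_comm_of_lie_eq_zero (hz c hc) u

lemma AdIrreducible.eqOn_zero_or_injOn (hm : AdIrreducible k m)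
    (hT : ∀ c ∈ k, ∀ u ∈ m, T ⁅c, u⁆ = ⁅c, T u⁆) :
    (∀ u ∈ m, T u = 0) ∨ ∀ u ∈ m, T u = 0 → u = 0 := by
  rcases hm.2.2 _ inf_le_left (hm.1.inf_ker_s4 hT) with h | h
  · exact Or.inr fun u hu hTu => (Submodule.mem_bot ℝ).mp (h ▸ ⟨hu, hTu⟩)
  · exact Or.inl fun u hu => (h.ge hu).2

lemma AdInvariant.lieSubalgebra_sup (hm : AdInvariant k m) :
    AdInvariant k (k.toSubmodule ⊔ m) := by
  intro c hc x hx
  obtain ⟨c', hc', p, hp, rfl⟩ := Submodule.mem_sup.mp hx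
  rw [lie_add]
  exact add_mem (Submodule.mem_sup_left (k.lie_mem hc hc')) (Submodule.mem_sup_right (hm c hc p hp))

lemma AdInvariant.lie_mem_of_mem_sup {s : LieSubalgebra ℝ 𝔤} (hm : AdInvariant k m)
    (hs : ∀ z ∈ s, ∀ c ∈ k, ⁅z, c⁆ = 0) {c x : 𝔤} (hc : c ∈ k) (hx : x ∈ s.toSubmodule ⊔ m) :
    ⁅c, x⁆ ∈ m := by
  obtain ⟨z, hz, w, hw, rfl⟩ := Submodule.mem_sup.mp hx
  rw [lie_add, ← lie_skew c z, hs z hz c hc, neg_zero, zero_add]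
  exact hm c hc w hw

lemma AdInvariant.lie_mem_sup (hm : AdInvariant k m) (hmm : ∀ u ∈ m, ∀ v ∈ m, ⁅u, v⁆ ∈ k)
    {x y : 𝔤} (hx : x ∈ k.toSubmodule ⊔ m) (hy : y ∈ k.toSubmodule ⊔ m) :
    ⁅x, y⁆ ∈ k.toSubmodule ⊔ m := by
  obtain ⟨c, hc, p, hp, rfl⟩ := Submodule.mem_sup.mp hx
  obtain ⟨c', hc', p', hp', rfl⟩ := Submodule.mem_sup.mp hy
  rw [add_lie, lie_add, lie_add, ← lie_skew p c']
  exact add_mem (add_mem (Submodule.mem_sup_left (k.lie_mem hc hc'))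
      (Submodule.mem_sup_right (hm c hc p' hp')))
    (add_mem (Submodule.mem_sup_right (neg_mem (hm c' hc' p hp)))
      (Submodule.mem_sup_left (hmm p hp p' hp')))

end AdModules

lemma exists_eigenvector_of_isSymm {E : Type*} [AddCommGroup E] [Module ℝ E]
    [FiniteDimensional ℝ E] [Nontrivial E] {b : LinearMap.BilinForm ℝ E} (hb : b.IsSymm)
    (hpos : ∀ x, x ≠ 0 → 0 < b x x) {T : E →ₗ[ℝ] E} (hT : ∀ x y, b (T x) y = b x (T y)) :
    ∃ (μ : ℝ) (v : E), v ≠ 0 ∧ T v = μ • v := by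
  let core : InnerProductSpace.Core ℝ E :=
    { inner := fun x y => b x y
      conj_inner_symm := fun x y => hb.eq y x
      re_inner_nonneg := fun x => by
        rcases eq_or_ne x 0 with rfl | h
        · simp
        · exact (hpos x h).le
      add_left := fun x y z => by simp
      smul_left := fun x y r => by simp
      definite := fun x hx => by_contra fun h => (hpos x h).ne' hx }
  let _ : NormedAddCommGroup E := core.toNormedAddCommGroup
  let _ : InnerProductSpace ℝ E := InnerProductSpace.ofCore core.toCore
  have hsymm : T.IsSymmetric := hT
  obtain ⟨v, hv⟩ := hsymm.hasEigenvalue_iSup_of_finiteDimensional.exists_hasEigenvector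
  exact ⟨_, v, hv.2, hv.apply_eq_smul⟩

section NegativeDefiniteKilling

variable {𝔤 : Type*} [LieRing 𝔤] [LieAlgebra ℝ 𝔤] {k : LieSubalgebra ℝ 𝔤} {m : Submodule ℝ 𝔤}
  {T : 𝔤 →ₗ[ℝ] 𝔤}

lemma killingForm_lie_lie (x y u v : 𝔤) :
    killingForm ℝ 𝔤 ⁅x, ⁅y, u⁆⁆ v = killingForm ℝ 𝔤 u ⁅y, ⁅x, v⁆⁆ := by
  rw [traceForm_apply_lie_apply', traceForm_apply_lie_apply', neg_neg]

lemma eq_zero_of_killingForm_self_eq_zero (hK : ∀ x : 𝔤, x ≠ 0 → killingForm ℝ 𝔤 x x < 0)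
    {x : 𝔤} (hx : killingForm ℝ 𝔤 x x = 0) : x = 0 :=
  by_contra fun h => (hK x h).ne hx

lemma eq_zero_of_forall_lie_eq_zero (hK : ∀ x : 𝔤, x ≠ 0 → killingForm ℝ 𝔤 x x < 0)
    {z : 𝔤} (hz : ∀ x : 𝔤, ⁅z, x⁆ = 0) : z = 0 := by
  refine eq_zero_of_killingForm_self_eq_zero hK ?_
  rw [killingForm_apply_apply, show ad ℝ 𝔤 z = 0 from LinearMap.ext hz, LinearMap.zero_comp,
    map_zero]

lemma exists_sub_mem_forall_killingForm_eq_zero [FiniteDimensional ℝ 𝔤]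
    (hK : ∀ x : 𝔤, x ≠ 0 → killingForm ℝ 𝔤 x x < 0) (W : Submodule ℝ 𝔤) (x : 𝔤) :
    ∃ a ∈ W, ∀ b ∈ W, killingForm ℝ 𝔤 (x - a) b = 0 := by
  have hrefl : (killingForm ℝ 𝔤).IsRefl := (traceForm_isSymm ℝ 𝔤 𝔤).isRefl
  have hnd : ((killingForm ℝ 𝔤).restrict W).Nondegenerate := by
    refine (LinearMap.IsRefl.nondegenerate_iff_separatingLeft
      (B := (killingForm ℝ 𝔤).restrict W) fun a b h => hrefl _ _ h).mpr ?_
    intro w hw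
    exact Subtype.ext (eq_zero_of_killingForm_self_eq_zero hK (hw w))
  obtain ⟨a, ha, o, ho, rfl⟩ := Submodule.mem_sup.mp
    ((LinearMap.BilinForm.isCompl_orthogonal_of_restrict_nondegenerate hrefl hnd).sup_eq_top ▸
      Submodule.mem_top (x := x))
  refine ⟨a, ha, fun b hb => ?_⟩
  rw [add_sub_cancel_left, traceForm_comm]
  exact LinearMap.BilinForm.mem_orthogonal_iff.mp ho b hb

/-- Schur's lemma; over `ℝ` the eigenvalue exists because `T` is `B`-symmetric. -/
lemma AdIrreducible.exists_eqOn_smul [FiniteDimensional ℝ 𝔤]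
    (hK : ∀ x : 𝔤, x ≠ 0 → killingForm ℝ 𝔤 x x < 0)
    (hm : AdIrreducible k m) (hTm : ∀ u ∈ m, T u ∈ m)
    (hTsym : ∀ u ∈ m, ∀ v ∈ m, killingForm ℝ 𝔤 (T u) v = killingForm ℝ 𝔤 u (T v))
    (hT : ∀ c ∈ k, ∀ u ∈ m, T ⁅c, u⁆ = ⁅c, T u⁆) :
    ∃ μ : ℝ, ∀ u ∈ m, T u = μ • u := by
  have : Nontrivial m := Submodule.nontrivial_iff_ne_bot.mpr hm.2.1
  obtain ⟨μ, v, hv0, hv⟩ := exists_eigenvector_of_isSymm (b := -(killingForm ℝ 𝔤).restrict m)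
    (T := T.restrict hTm) ⟨fun x y => by simp [traceForm_comm ℝ 𝔤 𝔤 x y]⟩
    (fun x hx => neg_pos.mpr (hK x (by simpa using hx)))
    (fun x y => by simp [hTsym x x.2 y y.2])
  refine ⟨μ, ?_⟩
  rcases hm.eqOn_zero_or_injOn (T := T - μ • LinearMap.id) (fun c hc u hu => by
      simp [hT c hc u hu]) with h | h
  · exact fun u hu => sub_eq_zero.mp (h u hu)
  · refine absurd (h v v.2 ?_) (by simpa using hv0)
    simpa [sub_eq_zero] using congrArg Subtype.val hv

end NegativeDefiniteKilling

def AdFaithful {𝔤 : Type*} [LieRing 𝔤] [LieAlgebra ℝ 𝔤] (s : LieSubalgebra ℝ 𝔤)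
    (m : Submodule ℝ 𝔤) : Prop :=
  ∀ z ∈ s, (∀ u ∈ m, ⁅z, u⁆ = 0) → z = 0

section CentralAction

variable {𝔤 : Type*} [LieRing 𝔤] [LieAlgebra ℝ 𝔤] [FiniteDimensional ℝ 𝔤]
  {k : LieSubalgebra ℝ 𝔤} {m : Submodule ℝ 𝔤}

/-- By Schur, `(ad s)²` and `ad z ∘ ad s` are scalars `μ ≠ 0` and `l` on `m`, so
`ad s ∘ ad (z - (l / μ) s)` vanishes on `m`, where `ad s` is injective. -/
lemma AdIrreducible.exists_lie_sub_smul_eq_zero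
    (hK : ∀ x : 𝔤, x ≠ 0 → killingForm ℝ 𝔤 x x < 0) (hm : AdIrreducible k m) {z s : 𝔤}
    (hz : z ∈ k) (hzc : ∀ c ∈ k, ⁅z, c⁆ = 0) (hs : s ∈ k) (hsc : ∀ c ∈ k, ⁅s, c⁆ = 0)
    (hsm : ¬ ∀ u ∈ m, ⁅s, u⁆ = 0) :
    ∃ t : ℝ, ∀ u ∈ m, ⁅z - t • s, u⁆ = 0 := by
  have hinj : ∀ u ∈ m, ⁅s, u⁆ = 0 → u = 0 :=
    (hm.eqOn_zero_or_injOn (ad_lie_of_forall_lie_eq_zero hsc)).resolve_left hsm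
  have hzs : ⁅z, s⁆ = 0 := hzc s hs
  obtain ⟨μ, hμ⟩ := hm.exists_eqOn_smul hK (T := ad ℝ 𝔤 s ∘ₗ ad ℝ 𝔤 s)
    (fun u hu => hm.1 s hs _ (hm.1 s hs u hu))
    (fun u _ v _ => killingForm_lie_lie s s u v)
    (fun c hc u _ => by simp only [LinearMap.comp_apply, ad_apply,
      lie_lie_comm_of_lie_eq_zero (hsc c hc)])
  obtain ⟨l, hl⟩ := hm.exists_eqOn_smul hK (T := ad ℝ 𝔤 z ∘ₗ ad ℝ 𝔤 s)
    (fun u hu => hm.1 z hz _ (hm.1 s hs u hu))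
    (fun u _ v _ => by
      simp only [LinearMap.comp_apply, ad_apply]
      rw [killingForm_lie_lie, lie_lie_comm_of_lie_eq_zero hzs])
    (fun c hc u _ => by simp only [LinearMap.comp_apply, ad_apply,
      lie_lie_comm_of_lie_eq_zero (hsc c hc), lie_lie_comm_of_lie_eq_zero (hzc c hc)])
  simp only [LinearMap.comp_apply, ad_apply] at hμ hl
  have hμ0 : μ ≠ 0 := by
    rintro rfl
    push Not at hsm
    obtain ⟨u, hu, hsu⟩ := hsm
    exact hsu (hinj _ (hm.1 s hs u hu) (by rw [hμ u hu, zero_smul]))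
  refine ⟨l / μ, fun u hu => hinj _ (hm.1 _ (sub_mem hz (k.smul_mem _ hs)) u hu) ?_⟩
  rw [sub_lie, smul_lie, lie_sub, lie_smul, ← lie_lie_comm_of_lie_eq_zero hzs, hl u hu,
    hμ u hu, smul_smul, div_mul_cancel₀ l hμ0, sub_self]

lemma AdIrreducible.exists_toSubmodule_eq_span
    (hK : ∀ x : 𝔤, x ≠ 0 → killingForm ℝ 𝔤 x x < 0) (hm : AdIrreducible k m)
    {s : LieSubalgebra ℝ 𝔤} (hsk : s ≤ k) (hsc : ∀ z ∈ s, ∀ c ∈ k, ⁅z, c⁆ = 0)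
    (hfaith : AdFaithful s m) : ∃ z, s.toSubmodule = ℝ ∙ z := by
  by_cases h : ∃ z₀ ∈ s, ¬ ∀ u ∈ m, ⁅z₀, u⁆ = 0
  · obtain ⟨z₀, hz₀, hz₀m⟩ := h
    refine ⟨z₀, le_antisymm (fun z hz => ?_) ((Submodule.span_singleton_le_iff_mem _ _).mpr hz₀)⟩
    obtain ⟨t, ht⟩ :=
      hm.exists_lie_sub_smul_eq_zero hK (hsk hz) (hsc z hz) (hsk hz₀) (hsc z₀ hz₀) hz₀m
    have : z - t • z₀ = 0 := hfaith _ (sub_mem hz (s.smul_mem t hz₀)) ht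
    exact Submodule.mem_span_singleton.mpr ⟨t, (sub_eq_zero.mp this).symm⟩
  · push Not at h
    refine ⟨0, ?_⟩
    rw [Submodule.span_singleton_eq_bot.mpr rfl, eq_bot_iff]
    intro z hz
    exact (Submodule.mem_bot ℝ).mpr (hfaith z hz (h z hz))

end CentralAction

structure IsOrthogonalDecomposition {𝔤 : Type*} [LieRing 𝔤] [LieAlgebra ℝ 𝔤]
    (𝔨 : LieSubalgebra ℝ 𝔤) (m₁ m₂ : Submodule ℝ 𝔤) : Prop where
  sup_eq_top : 𝔨.toSubmodule ⊔ m₁ ⊔ m₂ = ⊤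
  orthogonal_left : ∀ x ∈ 𝔨, ∀ y ∈ m₁, killingForm ℝ 𝔤 x y = 0
  orthogonal_right : ∀ x ∈ 𝔨, ∀ y ∈ m₂, killingForm ℝ 𝔤 x y = 0
  orthogonal : ∀ x ∈ m₁, ∀ y ∈ m₂, killingForm ℝ 𝔤 x y = 0
  adInvariant_left : AdInvariant 𝔨 m₁
  adInvariant_right : AdInvariant 𝔨 m₂

namespace IsOrthogonalDecomposition

variable {𝔤 : Type*} [LieRing 𝔤] [LieAlgebra ℝ 𝔤] {𝔨 𝔰 : LieSubalgebra ℝ 𝔤}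
  {m₁ m₂ : Submodule ℝ 𝔤}

lemma symm (h : IsOrthogonalDecomposition 𝔨 m₁ m₂) : IsOrthogonalDecomposition 𝔨 m₂ m₁ where
  sup_eq_top := by rw [sup_right_comm, h.sup_eq_top]
  orthogonal_left := h.orthogonal_right
  orthogonal_right := h.orthogonal_left
  orthogonal x hx y hy := by rw [traceForm_comm]; exact h.orthogonal y hy x hx
  adInvariant_left := h.adInvariant_right
  adInvariant_right := h.adInvariant_left

lemma exists_eq_add_add (h : IsOrthogonalDecomposition 𝔨 m₁ m₂) (x : 𝔤) :
    ∃ c ∈ 𝔨, ∃ p ∈ m₁, ∃ q ∈ m₂, x = c + p + q := by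
  obtain ⟨y, hy, q, hq, rfl⟩ := Submodule.mem_sup.mp (h.sup_eq_top ▸ Submodule.mem_top (x := x))
  obtain ⟨c, hc, p, hp, rfl⟩ := Submodule.mem_sup.mp hy
  exact ⟨c, hc, p, hp, q, hq, rfl⟩

lemma killingForm_eq_zero_of_mem_sup (h : IsOrthogonalDecomposition 𝔨 m₁ m₂) {u y : 𝔤}
    (hu : u ∈ m₁) (hy : y ∈ 𝔨.toSubmodule ⊔ m₂) :
    killingForm ℝ 𝔤 u y = 0 := by
  obtain ⟨c, hc, q, hq, rfl⟩ := Submodule.mem_sup.mp hy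
  rw [map_add, traceForm_comm, h.orthogonal_left c hc u hu, h.orthogonal u hu q hq, zero_add]

lemma isCompl (h : IsOrthogonalDecomposition 𝔨 m₁ m₂)
    (hK : ∀ x : 𝔤, x ≠ 0 → killingForm ℝ 𝔤 x x < 0) :
    IsCompl m₂ (𝔨.toSubmodule ⊔ m₁) where
  disjoint := Submodule.disjoint_def.mpr fun x hx₂ hx =>
    eq_zero_of_killingForm_self_eq_zero hK (h.symm.killingForm_eq_zero_of_mem_sup hx₂ hx)
  codisjoint := codisjoint_iff.mpr (by rw [sup_comm, h.sup_eq_top])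

lemma eq_zero_of_forall_lie_eq_zero (h : IsOrthogonalDecomposition 𝔨 m₁ m₂)
    (hK : ∀ x : 𝔤, x ≠ 0 → killingForm ℝ 𝔤 x x < 0) {z : 𝔤}
    (hz : ∀ c ∈ 𝔨, ⁅z, c⁆ = 0) (hz₁ : ∀ u ∈ m₁, ⁅z, u⁆ = 0) (hz₂ : ∀ u ∈ m₂, ⁅z, u⁆ = 0) :
    z = 0 := by
  refine _root_.eq_zero_of_forall_lie_eq_zero hK fun x => ?_
  obtain ⟨c, hc, p, hp, q, hq, rfl⟩ := h.exists_eq_add_add x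
  rw [lie_add, lie_add, hz c hc, hz₁ p hp, hz₂ q hq, add_zero, add_zero]

lemma lie_eq_zero_of_lie_mem (h : IsOrthogonalDecomposition 𝔨 m₁ m₂)
    (hK : ∀ x : 𝔤, x ≠ 0 → killingForm ℝ 𝔤 x x < 0)
    (h₁₁ : ∀ u ∈ m₁, ∀ v ∈ m₁, ⁅u, v⁆ ∈ 𝔨) (h₂₂ : ∀ u ∈ m₂, ∀ v ∈ m₂, ⁅u, v⁆ ∈ 𝔨.toSubmodule ⊔ m₂)
    {u v : 𝔤} (hu : u ∈ m₁) (hv : v ∈ m₂) : ⁅u, v⁆ = 0 := by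
  refine eq_zero_of_killingForm_self_eq_zero hK ?_
  obtain ⟨c, hc, p, hp, q, hq, hx⟩ := h.exists_eq_add_add ⁅u, v⁆
  nth_rewrite 2 [hx]
  rw [map_add, map_add, traceForm_apply_lie_apply, traceForm_apply_lie_apply' ℝ 𝔤 𝔤 u v p,
    traceForm_apply_lie_apply, ← lie_skew,
    h.killingForm_eq_zero_of_mem_sup hu
      (Submodule.mem_sup_right (neg_mem (h.adInvariant_right c hc v hv))),
    h.symm.killingForm_eq_zero_of_mem_sup hv (Submodule.mem_sup_left (h₁₁ u hu p hp)),
    h.killingForm_eq_zero_of_mem_sup hu (h₂₂ v hv q hq), neg_zero, add_zero, add_zero]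

lemma lie_mem_of_lie_eq_zero (h : IsOrthogonalDecomposition 𝔨 m₁ m₂)
    (h₁₁ : ∀ u ∈ m₁, ∀ v ∈ m₁, ⁅u, v⁆ ∈ 𝔨) (h₁₂ : ∀ u ∈ m₁, ∀ v ∈ m₂, ⁅u, v⁆ = 0) (x : 𝔤)
    {y : 𝔤} (hy : y ∈ 𝔨.toSubmodule ⊔ m₁) (hym₂ : ∀ q ∈ m₂, ⁅q, y⁆ = 0) :
    ⁅x, y⁆ ∈ 𝔨.toSubmodule ⊔ m₁ ∧ ∀ q ∈ m₂, ⁅q, ⁅x, y⁆⁆ = 0 := by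
  obtain ⟨c, hc, p, hp, q, hq, rfl⟩ := h.exists_eq_add_add x
  rw [add_lie, hym₂ q hq, add_zero]
  refine ⟨h.adInvariant_left.lie_mem_sup h₁₁
    (add_mem (Submodule.mem_sup_left hc) (Submodule.mem_sup_right hp)) hy, fun q' hq' => ?_⟩
  have hq'p : ⁅q', p⁆ = 0 := by rw [← lie_skew, h₁₂ p hp q' hq', neg_zero]
  rw [leibniz_lie, hym₂ q' hq', lie_zero, add_zero, lie_add, hq'p, add_zero, ← lie_skew q' c,
    neg_lie, hym₂ _ (h.adInvariant_right c hc q' hq'), neg_zero]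

/-- Otherwise `[m₁, m₂] = 0` and `(𝔨 ⊕ m₁) ∩ 𝔷(m₂)` is a nonzero proper ideal. -/
lemma exists_lie_not_mem_sup [LieAlgebra.IsSimple ℝ 𝔤] (h : IsOrthogonalDecomposition 𝔨 m₁ m₂)
    (hK : ∀ x : 𝔤, x ≠ 0 → killingForm ℝ 𝔤 x x < 0) (hm₁ : m₁ ≠ ⊥) (hm₂ : m₂ ≠ ⊥)
    (h₁₁ : ∀ u ∈ m₁, ∀ v ∈ m₁, ⁅u, v⁆ ∈ 𝔨) :
    ∃ u ∈ m₂, ∃ v ∈ m₂, ⁅u, v⁆ ∉ 𝔨.toSubmodule ⊔ m₂ := by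
  by_contra! h₂₂
  have h₁₂ := fun u hu v hv => h.lie_eq_zero_of_lie_mem hK h₁₁ h₂₂ (u := u) (v := v) hu hv
  let I : LieIdeal ℝ 𝔤 :=
    { carrier := {y | y ∈ 𝔨.toSubmodule ⊔ m₁ ∧ ∀ q ∈ m₂, ⁅q, y⁆ = 0}
      add_mem' := fun hx hy => ⟨add_mem hx.1 hy.1, fun q hq => by
        rw [lie_add, hx.2 q hq, hy.2 q hq, add_zero]⟩
      zero_mem' := ⟨zero_mem _, fun q _ => lie_zero q⟩
      smul_mem' := fun t y hy => ⟨Submodule.smul_mem _ t hy.1, fun q hq => by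
        rw [lie_smul, hy.2 q hq, smul_zero]⟩
      lie_mem := fun {x y} hy => h.lie_mem_of_lie_eq_zero h₁₁ h₁₂ x hy.1 hy.2 }
  rcases IsSimple.eq_bot_or_eq_top I with hI | hI
  · refine hm₁ (eq_bot_iff.mpr fun u hu => ?_)
    have huI : u ∈ I := ⟨Submodule.mem_sup_right hu, fun q hq => by
      rw [← lie_skew, h₁₂ u hu q hq, neg_zero]⟩
    rw [hI] at huI
    exact huI
  · refine hm₂ (eq_bot_iff.mpr fun v hv => ?_)
    have hvI : v ∈ I := hI ▸ LieSubmodule.mem_top v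
    exact (h.isCompl hK).disjoint.le_bot ⟨hv, hvI.1⟩

lemma adFaithful_of_lie_sub_mem [FiniteDimensional ℝ 𝔤] (h : IsOrthogonalDecomposition 𝔨 m₁ m₂)
    (hK : ∀ x : 𝔤, x ≠ 0 → killingForm ℝ 𝔤 x x < 0) (h𝔰 : ∀ z ∈ 𝔰, ∀ c ∈ 𝔨, ⁅z, c⁆ = 0)
    (hirr₂ : AdIrreducible 𝔨 m₂) {u v w : 𝔤} (hu : u ∈ m₁) (hv : v ∈ m₁) (hw : w ∈ m₂)
    (hw0 : w ≠ 0) (huvw : ⁅u, v⁆ - w ∈ 𝔨.toSubmodule ⊔ m₁) : AdFaithful 𝔰 m₁ := by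
  intro z hz hzm₁
  have hzw : ⁅z, w⁆ = 0 := by
    obtain ⟨c, hc, p, hp, e⟩ := Submodule.mem_sup.mp huvw
    have hz_uv : ⁅z, ⁅u, v⁆⁆ = 0 := by
      rw [leibniz_lie, hzm₁ u hu, hzm₁ v hv, zero_lie, lie_zero, add_zero]
    have hz_c_p : ⁅z, c + p⁆ = 0 := by rw [lie_add, h𝔰 z hz c hc, hzm₁ p hp, add_zero]
    rwa [e, lie_sub, hz_uv, zero_sub, neg_eq_zero] at hz_c_p
  have hzm₂ : ∀ q ∈ m₂, ⁅z, q⁆ = 0 :=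
    (hirr₂.eqOn_zero_or_injOn (ad_lie_of_forall_lie_eq_zero (h𝔰 z hz))).resolve_right
      fun hinj => hw0 (hinj w hw hzw)
  exact h.eq_zero_of_forall_lie_eq_zero hK (h𝔰 z hz) hzm₁ hzm₂

lemma adFaithful_or [FiniteDimensional ℝ 𝔤] [LieAlgebra.IsSimple ℝ 𝔤]
    (h : IsOrthogonalDecomposition 𝔨 m₁ m₂) (hK : ∀ x : 𝔤, x ≠ 0 → killingForm ℝ 𝔤 x x < 0)
    (h𝔰 : ∀ z ∈ 𝔰, ∀ c ∈ 𝔨, ⁅z, c⁆ = 0) (hirr₁ : AdIrreducible 𝔨 m₁)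
    (hirr₂ : AdIrreducible 𝔨 m₂) (hconv : ∀ x ∈ m₁, ∀ y ∈ m₁, ⁅x, y⁆ ∈ 𝔨.toSubmodule ⊔ m₂) :
    AdFaithful 𝔰 m₁ ∨ AdFaithful 𝔰 m₂ := by
  by_cases h₁₁ : ∀ u ∈ m₁, ∀ v ∈ m₁, ⁅u, v⁆ ∈ 𝔨
  · obtain ⟨u, hu, v, hv, huv⟩ := h.exists_lie_not_mem_sup hK hirr₁.2.1 hirr₂.2.1 h₁₁
    obtain ⟨c, hc, p, hp, q, hq, e⟩ := h.exists_eq_add_add ⁅u, v⁆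
    refine Or.inr (h.symm.adFaithful_of_lie_sub_mem hK h𝔰 hirr₁ hu hv hp ?_ ?_)
    · rintro rfl
      apply huv
      rw [e, add_zero]
      exact add_mem (Submodule.mem_sup_left hc) (Submodule.mem_sup_right hq)
    · rw [e, add_sub_right_comm, add_sub_cancel_right]
      exact add_mem (Submodule.mem_sup_left hc) (Submodule.mem_sup_right hq)
  · push Not at h₁₁
    obtain ⟨u, hu, v, hv, huv⟩ := h₁₁
    obtain ⟨c, hc, w, hw, e⟩ := Submodule.mem_sup.mp (hconv u hu v hv)
    refine Or.inl (h.adFaithful_of_lie_sub_mem hK h𝔰 hirr₂ hu hv hw ?_ ?_)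
    · rintro rfl
      apply huv
      rwa [← e, add_zero]
    · rw [← e, add_sub_cancel_right]
      exact Submodule.mem_sup_left hc

lemma exists_toSubmodule_eq_span [FiniteDimensional ℝ 𝔤] [LieAlgebra.IsSimple ℝ 𝔤]
    (h : IsOrthogonalDecomposition 𝔨 m₁ m₂) (hK : ∀ x : 𝔤, x ≠ 0 → killingForm ℝ 𝔤 x x < 0)
    (h𝔰𝔨 : 𝔰 ≤ 𝔨) (h𝔰 : ∀ z ∈ 𝔰, ∀ c ∈ 𝔨, ⁅z, c⁆ = 0) (hirr₁ : AdIrreducible 𝔨 m₁)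
    (hirr₂ : AdIrreducible 𝔨 m₂) (hconv : ∀ x ∈ m₁, ∀ y ∈ m₁, ⁅x, y⁆ ∈ 𝔨.toSubmodule ⊔ m₂) :
    ∃ z, 𝔰.toSubmodule = ℝ ∙ z :=
  (h.adFaithful_or hK h𝔰 hirr₁ hirr₂ hconv).elim (hirr₁.exists_toSubmodule_eq_span hK h𝔰𝔨 h𝔰)
    (hirr₂.exists_toSubmodule_eq_span hK h𝔰𝔨 h𝔰)

end IsOrthogonalDecomposition

section GOMetric

variable {𝔤 : Type*} [LieRing 𝔤] [LieAlgebra ℝ 𝔤] {𝔨 𝔨₁ : LieSubalgebra ℝ 𝔤}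
  {𝔪 n : Submodule ℝ 𝔤} {Λ : 𝔤 →ₗ[ℝ] 𝔤}

lemma IsGOMetric.killingForm_lie_apply_self_eq_zero (hGO : IsGOMetric 𝔨₁ n Λ) (h𝔨₁ : 𝔨₁ ≤ 𝔨)
    (h𝔪 : ∀ x ∈ 𝔨, ∀ y ∈ 𝔪, killingForm ℝ 𝔤 x y = 0) (hn : ∀ c ∈ 𝔨, ∀ x ∈ n, ⁅c, x⁆ ∈ 𝔪)
    (hΛn : ∀ x ∈ n, Λ x ∈ n) {t : 𝔤} (ht : t ∈ 𝔨)
    (ht₁ : ∀ a ∈ 𝔨₁, killingForm ℝ 𝔤 t a = 0) {x : 𝔤} (hx : x ∈ n) :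
    killingForm ℝ 𝔤 ⁅x, Λ x⁆ t = 0 := by
  obtain ⟨a, ha, hbr⟩ := hGO x hx
  have hbr_t : killingForm ℝ 𝔤 ⁅a + x, Λ x⁆ t = 0 := by rw [traceForm_comm]; exact ht₁ _ hbr
  have ha_t : killingForm ℝ 𝔤 ⁅a, Λ x⁆ t = 0 := by
    rw [traceForm_comm]; exact h𝔪 t ht _ (hn a (h𝔨₁ ha) _ (hΛn x hx))
  rwa [add_lie, map_add, LinearMap.add_apply, ha_t, zero_add] at hbr_t

lemma IsGOMetric.apply_lie_eq_of_orthogonal (hK : ∀ x : 𝔤, x ≠ 0 → killingForm ℝ 𝔤 x x < 0)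
    (hGO : IsGOMetric 𝔨₁ n Λ) (h𝔨₁ : 𝔨₁ ≤ 𝔨)
    (h𝔪 : ∀ x ∈ 𝔨, ∀ y ∈ 𝔪, killingForm ℝ 𝔤 x y = 0) (h𝔪n : 𝔪 ≤ n)
    (hn : ∀ c ∈ 𝔨, ∀ x ∈ n, ⁅c, x⁆ ∈ 𝔪) (hΛn : ∀ x ∈ n, Λ x ∈ n)
    (hΛsym : ∀ x ∈ n, ∀ y ∈ n, killingForm ℝ 𝔤 (Λ x) y = killingForm ℝ 𝔤 x (Λ y))
    {t : 𝔤} (ht : t ∈ 𝔨) (ht₁ : ∀ a ∈ 𝔨₁, killingForm ℝ 𝔤 t a = 0) {x : 𝔤} (hx : x ∈ n) :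
    Λ ⁅t, x⁆ = ⁅t, Λ x⁆ := by
  have hq := fun y hy => hGO.killingForm_lie_apply_self_eq_zero h𝔨₁ h𝔪 hn hΛn ht ht₁ (x := y) hy
  have htx : ⁅t, x⁆ ∈ n := h𝔪n (hn t ht x hx)
  have hd : Λ ⁅t, x⁆ - ⁅t, Λ x⁆ ∈ n := sub_mem (hΛn _ htx) (h𝔪n (hn t ht _ (hΛn x hx)))
  suffices ∀ y ∈ n, killingForm ℝ 𝔤 (Λ ⁅t, x⁆ - ⁅t, Λ x⁆) y = 0 from
    sub_eq_zero.mp (eq_zero_of_killingForm_self_eq_zero hK (this _ hd))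
  intro y hy
  have hpol := hq (x + y) (add_mem hx hy)
  simp only [map_add, lie_add, add_lie, LinearMap.add_apply, hq x hx, hq y hy, zero_add,
    add_zero] at hpol
  have e₁ : killingForm ℝ 𝔤 ⁅x, Λ y⁆ t = killingForm ℝ 𝔤 (Λ ⁅t, x⁆) y := by
    rw [traceForm_apply_lie_apply' ℝ 𝔤 𝔤 x, ← lie_skew x t, map_neg, neg_neg,
      traceForm_comm ℝ 𝔤 𝔤 (Λ y), hΛsym _ htx y hy]
  have e₂ : killingForm ℝ 𝔤 ⁅y, Λ x⁆ t = -killingForm ℝ 𝔤 ⁅t, Λ x⁆ y := by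
    rw [traceForm_apply_lie_apply ℝ 𝔤 𝔤 y, ← lie_skew (Λ x) t, map_neg, traceForm_comm ℝ 𝔤 𝔤 y]
  rw [map_sub, LinearMap.sub_apply, ← e₁]
  linarith

lemma IsGOMetric.apply_lie_eq [FiniteDimensional ℝ 𝔤]
    (hK : ∀ x : 𝔤, x ≠ 0 → killingForm ℝ 𝔤 x x < 0)
    (hGO : IsGOMetric 𝔨₁ n Λ) (h𝔨₁ : 𝔨₁ ≤ 𝔨)
    (h𝔪 : ∀ x ∈ 𝔨, ∀ y ∈ 𝔪, killingForm ℝ 𝔤 x y = 0) (h𝔪n : 𝔪 ≤ n)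
    (hn : ∀ c ∈ 𝔨, ∀ x ∈ n, ⁅c, x⁆ ∈ 𝔪) (hΛn : ∀ x ∈ n, Λ x ∈ n)
    (hΛsym : ∀ x ∈ n, ∀ y ∈ n, killingForm ℝ 𝔤 (Λ x) y = killingForm ℝ 𝔤 x (Λ y))
    (hΛ𝔨₁ : ∀ a ∈ 𝔨₁, ∀ x ∈ n, Λ ⁅a, x⁆ = ⁅a, Λ x⁆) {c : 𝔤} (hc : c ∈ 𝔨) {x : 𝔤} (hx : x ∈ n) :
    Λ ⁅c, x⁆ = ⁅c, Λ x⁆ := by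
  obtain ⟨a, ha, hca⟩ := exists_sub_mem_forall_killingForm_eq_zero hK 𝔨₁.toSubmodule c
  have hc_a := hGO.apply_lie_eq_of_orthogonal hK h𝔨₁ h𝔪 h𝔪n hn hΛn hΛsym
    (sub_mem hc (h𝔨₁ ha)) hca hx
  calc Λ ⁅c, x⁆ = Λ ⁅a, x⁆ + Λ ⁅c - a, x⁆ := by rw [← map_add, ← add_lie, add_sub_cancel]
    _ = ⁅c, Λ x⁆ := by rw [hΛ𝔨₁ a ha x hx, hc_a, ← add_lie, add_sub_cancel]

end GOMetric

section InvariantOperator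

variable {𝔤 : Type*} [LieRing 𝔤] [LieAlgebra ℝ 𝔤] {𝔨 𝔰 : LieSubalgebra ℝ 𝔤}
  {𝔪 m₁ m₂ : Submodule ℝ 𝔤} {Λ : 𝔤 →ₗ[ℝ] 𝔤}

lemma apply_mem_of_mem_of_centralizer (h𝔨cent : ∀ x : 𝔤, x ∈ 𝔨 ↔ ∀ s ∈ 𝔰, ⁅s, x⁆ = 0)
    (h𝔰𝔨 : 𝔰 ≤ 𝔨) (hdisj : Disjoint 𝔨.toSubmodule 𝔪)
    (hΛn : ∀ x ∈ 𝔰.toSubmodule ⊔ 𝔪, Λ x ∈ 𝔰.toSubmodule ⊔ 𝔪)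
    (hΛ : ∀ c ∈ 𝔨, ∀ x ∈ 𝔰.toSubmodule ⊔ 𝔪, Λ ⁅c, x⁆ = ⁅c, Λ x⁆) {s : 𝔤} (hs : s ∈ 𝔰) :
    Λ s ∈ 𝔰 := by
  have hΛs : Λ s ∈ 𝔨 := (h𝔨cent _).mpr fun z hz => by
    rw [← hΛ z (h𝔰𝔨 hz) s (Submodule.mem_sup_left hs), (h𝔨cent s).mp (h𝔰𝔨 hs) z hz, map_zero]
  obtain ⟨s', hs', w, hw, e⟩ := Submodule.mem_sup.mp (hΛn s (Submodule.mem_sup_left hs))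
  have hw𝔨 : w ∈ 𝔨.toSubmodule := by
    rw [← add_sub_cancel_left s' w, e]
    exact sub_mem hΛs (h𝔰𝔨 hs')
  rw [← e, Submodule.disjoint_def.mp hdisj w hw𝔨 hw, add_zero]
  exact hs'

lemma apply_mem_of_mem_of_orthogonal [FiniteDimensional ℝ 𝔤]
    (hK : ∀ x : 𝔤, x ≠ 0 → killingForm ℝ 𝔤 x x < 0) (h𝔰𝔨 : 𝔰 ≤ 𝔨)
    (h𝔪 : ∀ x ∈ 𝔨, ∀ y ∈ 𝔪, killingForm ℝ 𝔤 x y = 0)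
    (hΛn : ∀ x ∈ 𝔰.toSubmodule ⊔ 𝔪, Λ x ∈ 𝔰.toSubmodule ⊔ 𝔪)
    (hΛsym : ∀ x ∈ 𝔰.toSubmodule ⊔ 𝔪, ∀ y ∈ 𝔰.toSubmodule ⊔ 𝔪,
      killingForm ℝ 𝔤 (Λ x) y = killingForm ℝ 𝔤 x (Λ y))
    (hΛ𝔰 : ∀ s ∈ 𝔰, Λ s ∈ 𝔰) {u : 𝔤} (hu : u ∈ 𝔪) : Λ u ∈ 𝔪 := by
  obtain ⟨s, hs, w, hw, e⟩ := Submodule.mem_sup.mp (hΛn u (Submodule.mem_sup_right hu))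
  have hs0 : s = 0 := by
    refine eq_zero_of_killingForm_self_eq_zero hK ?_
    have hΛu_s : killingForm ℝ 𝔤 (Λ u) s = 0 := by
      rw [hΛsym u (Submodule.mem_sup_right hu) s (Submodule.mem_sup_left hs), traceForm_comm]
      exact h𝔪 _ (h𝔰𝔨 (hΛ𝔰 s hs)) u hu
    rwa [← e, map_add, LinearMap.add_apply, traceForm_comm ℝ 𝔤 𝔤 w, h𝔪 s (h𝔰𝔨 hs) w hw,
      add_zero] at hΛu_s
  rw [← e, hs0, zero_add]
  exact hw

/-- Otherwise the projection of `Λ` onto `m₂` along `𝔨 ⊕ m₁` would be an equivalence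
`m₁ ≅ m₂`. -/
lemma IsOrthogonalDecomposition.apply_mem_left [FiniteDimensional ℝ 𝔤]
    (h : IsOrthogonalDecomposition 𝔨 m₁ m₂) (hK : ∀ x : 𝔤, x ≠ 0 → killingForm ℝ 𝔤 x x < 0)
    (hirr₁ : AdIrreducible 𝔨 m₁) (hirr₂ : AdIrreducible 𝔨 m₂) (hineq : ¬ AdEquiv 𝔨 m₁ m₂)
    (hΛ : ∀ u ∈ m₁, Λ u ∈ m₁ ⊔ m₂) (hΛ𝔨 : ∀ c ∈ 𝔨, ∀ u ∈ m₁, Λ ⁅c, u⁆ = ⁅c, Λ u⁆)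
    {u : 𝔤} (hu : u ∈ m₁) : Λ u ∈ m₁ := by
  set P := m₂.projection (𝔨.toSubmodule ⊔ m₁) (h.isCompl hK)
  have hPΛ : ∀ c ∈ 𝔨, ∀ u ∈ m₁, (P ∘ₗ Λ) ⁅c, u⁆ = ⁅c, (P ∘ₗ Λ) u⁆ := fun c hc u hu => by
    rw [LinearMap.comp_apply, hΛ𝔨 c hc u hu, h.adInvariant_right.projection_lie _
      h.adInvariant_left.lieSubalgebra_sup hc, LinearMap.comp_apply]
  rcases hirr₁.eqOn_zero_or_injOn hPΛ with hP0 | hinj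
  · obtain ⟨p, hp, q, hq, e⟩ := Submodule.mem_sup.mp (hΛ u hu)
    have hq0 := hP0 u hu
    rw [LinearMap.comp_apply, ← e, map_add, Submodule.projection_apply_of_mem_left _ hq,
      Submodule.projection_apply_of_mem_right _ (Submodule.mem_sup_right hp), zero_add] at hq0
    rw [← e, hq0, add_zero]
    exact hp
  · refine absurd ⟨P ∘ₗ Λ, ?_, hinj, hPΛ⟩ hineq
    have hle : m₁.map (P ∘ₗ Λ) ≤ m₂ := by
      rintro _ ⟨v, -, rfl⟩
      exact Submodule.projection_apply_mem _ _
    refine (hirr₂.2.2 _ hle (hirr₁.1.map hPΛ)).resolve_left fun hbot => hirr₁.2.1 ?_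
    refine eq_bot_iff.mpr fun v hv => hinj v hv ?_
    simpa [hbot] using Submodule.mem_map_of_mem (f := P ∘ₗ Λ) hv

lemma IsOrthogonalDecomposition.apply_mem_right (h : IsOrthogonalDecomposition 𝔨 m₁ m₂)
    (hK : ∀ x : 𝔤, x ≠ 0 → killingForm ℝ 𝔤 x x < 0) (hΛ₁ : ∀ u ∈ m₁, Λ u ∈ m₁)
    (hΛsym : ∀ v ∈ m₂, ∀ u ∈ m₁, killingForm ℝ 𝔤 (Λ v) u = killingForm ℝ 𝔤 v (Λ u))
    {v : 𝔤} (hv₂ : v ∈ m₂) (hΛv : Λ v ∈ m₁ ⊔ m₂) : Λ v ∈ m₂ := by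
  obtain ⟨p, hp, q, hq, e⟩ := Submodule.mem_sup.mp hΛv
  have hp0 : p = 0 := by
    refine eq_zero_of_killingForm_self_eq_zero hK ?_
    have hΛv_p := hΛsym v hv₂ p hp
    rwa [traceForm_comm ℝ 𝔤 𝔤 v, h.orthogonal _ (hΛ₁ p hp) v hv₂, ← e, map_add,
      LinearMap.add_apply, traceForm_comm ℝ 𝔤 𝔤 q, h.orthogonal p hp q hq, add_zero] at hΛv_p
  rw [← e, hp0, zero_add]
  exact hq

lemma IsOrthogonalDecomposition.exists_eqOn_smul [FiniteDimensional ℝ 𝔤]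
    (h : IsOrthogonalDecomposition 𝔨 m₁ m₂) (hK : ∀ x : 𝔤, x ≠ 0 → killingForm ℝ 𝔤 x x < 0)
    (hirr₁ : AdIrreducible 𝔨 m₁) (hirr₂ : AdIrreducible 𝔨 m₂) (hineq : ¬ AdEquiv 𝔨 m₁ m₂)
    (hΛ : ∀ u ∈ m₁ ⊔ m₂, Λ u ∈ m₁ ⊔ m₂)
    (hΛsym : ∀ u ∈ m₁ ⊔ m₂, ∀ v ∈ m₁ ⊔ m₂, killingForm ℝ 𝔤 (Λ u) v = killingForm ℝ 𝔤 u (Λ v))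
    (hΛ𝔨 : ∀ c ∈ 𝔨, ∀ u ∈ m₁ ⊔ m₂, Λ ⁅c, u⁆ = ⁅c, Λ u⁆) :
    (∃ c₁ : ℝ, ∀ u ∈ m₁, Λ u = c₁ • u) ∧ ∃ c₂ : ℝ, ∀ u ∈ m₂, Λ u = c₂ • u := by
  have h₁ : m₁ ≤ m₁ ⊔ m₂ := le_sup_left
  have h₂ : m₂ ≤ m₁ ⊔ m₂ := le_sup_right
  have hΛ₁ : ∀ u ∈ m₁, Λ u ∈ m₁ := fun u hu => h.apply_mem_left hK hirr₁ hirr₂ hineq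
    (fun u hu => hΛ u (h₁ hu)) (fun c hc u hu => hΛ𝔨 c hc u (h₁ hu)) hu
  have hΛ₂ : ∀ v ∈ m₂, Λ v ∈ m₂ := fun v hv => h.apply_mem_right hK hΛ₁
    (fun v hv u hu => hΛsym v (h₂ hv) u (h₁ hu)) hv (hΛ v (h₂ hv))
  exact ⟨hirr₁.exists_eqOn_smul hK hΛ₁ (fun u hu v hv => hΛsym u (h₁ hu) v (h₁ hv))
      (fun c hc u hu => hΛ𝔨 c hc u (h₁ hu)),
    hirr₂.exists_eqOn_smul hK hΛ₂ (fun u hu v hv => hΛsym u (h₂ hu) v (h₂ hv))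
      (fun c hc u hu => hΛ𝔨 c hc u (h₂ hu))⟩

end InvariantOperator

lemma IsGOMetric.eq_of_adReducible {𝔤 : Type*} [LieRing 𝔤] [LieAlgebra ℝ 𝔤]
    {𝔨 𝔨₁ : LieSubalgebra ℝ 𝔤} {n m : Submodule ℝ 𝔤} {Λ : 𝔤 →ₗ[ℝ] 𝔤} {z : 𝔤} {σ c : ℝ}
    (hGO : IsGOMetric 𝔨₁ n Λ) (h𝔨 : 𝔨.toSubmodule = (ℝ ∙ z) ⊔ 𝔨₁.toSubmodule)
    (hdisj : Disjoint 𝔨₁.toSubmodule m) (hzn : z ∈ n) (hmn : m ≤ n)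
    (hz₁ : ∀ a ∈ 𝔨₁, ⁅z, a⁆ = 0) (hirr : AdIrreducible 𝔨 m) (hred : AdReducible 𝔨₁ m)
    (hΛz : Λ z = σ • z) (hΛm : ∀ u ∈ m, Λ u = c • u) : σ = c := by
  by_contra hσc
  obtain ⟨-, U, hUm, hU, hU0, hUm'⟩ := hred
  have hz𝔨 : z ∈ 𝔨 := (h𝔨.ge (Submodule.mem_sup_left (Submodule.mem_span_singleton_self z)) :)
  have hzU : ∀ u ∈ U, ⁅z, u⁆ ∈ U := by
    intro u hu
    obtain ⟨a, ha, hbr⟩ := hGO (z + u) (add_mem hzn (hmn (hUm hu)))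
    have e : ⁅a + (z + u), Λ (z + u)⁆ = c • ⁅a, u⁆ + (c - σ) • ⁅z, u⁆ := by
      rw [map_add, hΛz, hΛm u (hUm hu)]
      have haz : ⁅a, z⁆ = 0 := by rw [← lie_skew, hz₁ a ha, neg_zero]
      simp only [lie_add, add_lie, lie_smul, haz, lie_self]
      rw [← lie_skew u z]
      module
    have h0 : c • ⁅a, u⁆ + (c - σ) • ⁅z, u⁆ = 0 := Submodule.disjoint_def.mp hdisj _ (e ▸ hbr)
      (add_mem (Submodule.smul_mem _ _ (hirr.1 a (h𝔨.ge (Submodule.mem_sup_right ha)) u (hUm hu)))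
        (Submodule.smul_mem _ _ (hirr.1 z hz𝔨 u (hUm hu))))
    have hz_u : ⁅z, u⁆ = (c - σ)⁻¹ • -(c • ⁅a, u⁆) := by
      rw [← eq_neg_of_add_eq_zero_right h0, smul_smul,
        inv_mul_cancel₀ (sub_ne_zero.mpr (Ne.symm hσc)), one_smul]
    rw [hz_u]
    exact Submodule.smul_mem _ _ (neg_mem (Submodule.smul_mem _ _ (hU a ha u hu)))
  have hU𝔨 : AdInvariant 𝔨 U := by
    intro x hx u hu
    obtain ⟨y, hy, a, ha, rfl⟩ := Submodule.mem_sup.mp (h𝔨.le hx)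
    obtain ⟨t, rfl⟩ := Submodule.mem_span_singleton.mp hy
    rw [add_lie, smul_lie]
    exact add_mem (Submodule.smul_mem _ t (hzU u hu)) (hU a ha u hu)
  exact (hirr.2.2 U hUm hU𝔨).elim hU0 hUm'

lemma isGOMetric_of_eqOn_smul {𝔤 : Type*} [LieRing 𝔤] [LieAlgebra ℝ 𝔤] {k : LieSubalgebra ℝ 𝔤}
    {n : Submodule ℝ 𝔤} {Λ : 𝔤 →ₗ[ℝ] 𝔤} {c : ℝ} (hΛ : ∀ x ∈ n, Λ x = c • x) :
    IsGOMetric k n Λ := fun x hx =>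
  ⟨0, k.zero_mem, by rw [zero_add, hΛ x hx, lie_smul, lie_self, smul_zero]; exact zero_mem _⟩

lemma pos_of_eqOn_smul {𝔤 : Type*} [LieRing 𝔤] [LieAlgebra ℝ 𝔤] {n m : Submodule ℝ 𝔤}
    {Λ : 𝔤 →ₗ[ℝ] 𝔤} {c : ℝ} (hK : ∀ x : 𝔤, x ≠ 0 → killingForm ℝ 𝔤 x x < 0)
    (hΛpos : ∀ x ∈ n, x ≠ 0 → 0 < -(killingForm ℝ 𝔤 (Λ x) x)) (hm : m ≠ ⊥) (hmn : m ≤ n)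
    (hΛm : ∀ u ∈ m, Λ u = c • u) : 0 < c := by
  obtain ⟨u, hu, hu0⟩ := (Submodule.ne_bot_iff m).mp hm
  have hΛu := hΛpos u (hmn hu) hu0
  rw [hΛm u hu, map_smul, LinearMap.smul_apply, smul_eq_mul] at hΛu
  nlinarith [hK u hu0]

theorem goMetric_iff_standard_of_two_summands_both_reducible_general
    {𝔤 : Type*} [LieRing 𝔤] [LieAlgebra ℝ 𝔤] [FiniteDimensional ℝ 𝔤]
    -- `G` is a compact simple Lie group: `𝔤` is simple with negative definite Killing form
    [LieAlgebra.IsSimple ℝ 𝔤]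
    (hcompact : ∀ x : 𝔤, x ≠ 0 → killingForm ℝ 𝔤 x x < 0)
    (𝔨 𝔨₁ 𝔰 : LieSubalgebra ℝ 𝔤)
    -- `S` is a torus in `G` and `K = C(S)` is its centralizer
    (h𝔨cent : ∀ x : 𝔤, x ∈ 𝔨 ↔ ∀ s ∈ 𝔰, ⁅s, x⁆ = 0)
    -- `K = S × K₁`, `K₁` being the semisimple part of `K`
    (h𝔰𝔨 : 𝔰 ≤ 𝔨) (h𝔨₁𝔨 : 𝔨₁ ≤ 𝔨)
    (h𝔨sum : 𝔰.toSubmodule ⊔ 𝔨₁.toSubmodule = 𝔨.toSubmodule)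
    -- the `B`-orthogonal reductive decomposition `𝔤 = 𝔨 ⊕ 𝔪`, where `B = -Killing form`
    (𝔪 : Submodule ℝ 𝔤)
    (h𝔪compl : IsCompl 𝔨.toSubmodule 𝔪)
    (h𝔪orth : ∀ x ∈ 𝔨, ∀ y ∈ 𝔪, killingForm ℝ 𝔤 x y = 0)
    (h𝔪inv : AdInvariant 𝔨 𝔪)
    -- the decomposition `𝔪 = 𝔪₁ ⊕ 𝔪₂`, `B`-orthogonal, into two pairwise inequivalent
    -- irreducible `Ad(K)`-submodules, with the convention `[𝔪₁, 𝔪₁] ⊆ 𝔨 ⊕ 𝔪₂`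
    (m₁ m₂ : Submodule ℝ 𝔤)
    (hmsub₁ : m₁ ≤ 𝔪) (hmsub₂ : m₂ ≤ 𝔪)
    (hmsum : m₁ ⊔ m₂ = 𝔪)
    (hmorth : ∀ x ∈ m₁, ∀ y ∈ m₂, killingForm ℝ 𝔤 x y = 0)
    (hmirr₁ : AdIrreducible 𝔨 m₁) (hmirr₂ : AdIrreducible 𝔨 m₂)
    (hmineq : ¬ AdEquiv 𝔨 m₁ m₂)
    (hconv : ∀ x ∈ m₁, ∀ y ∈ m₁, ⁅x, y⁆ ∈ 𝔨.toSubmodule ⊔ m₂)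
    -- both `𝔪₁` and `𝔪₂` are reducible as `Ad(K₁)`-modules
    (hred₁ : AdReducible 𝔨₁ m₁) (hred₂ : AdReducible 𝔨₁ m₂)
    -- `Λ` is the associated operator of the `G`-invariant metric `g` on the `M`-space
    -- `G/K₁`, whose tangent space at the origin is `𝔫 = 𝔰 ⊕ 𝔪`:
    -- positive definite, symmetric w.r.t. `B = -Killing`, and `Ad(K₁)`-equivariant
    (Λ : 𝔤 →ₗ[ℝ] 𝔤)
    (hΛ𝔫 : ∀ x ∈ 𝔰.toSubmodule ⊔ 𝔪, Λ x ∈ 𝔰.toSubmodule ⊔ 𝔪)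
    (hΛsym : ∀ x ∈ 𝔰.toSubmodule ⊔ 𝔪, ∀ y ∈ 𝔰.toSubmodule ⊔ 𝔪,
      killingForm ℝ 𝔤 (Λ x) y = killingForm ℝ 𝔤 x (Λ y))
    (hΛpos : ∀ x ∈ 𝔰.toSubmodule ⊔ 𝔪, x ≠ 0 → 0 < -(killingForm ℝ 𝔤 (Λ x) x))
    (hΛequiv : ∀ k ∈ 𝔨₁, ∀ x ∈ 𝔰.toSubmodule ⊔ 𝔪, Λ ⁅k, x⁆ = ⁅k, Λ x⁆)
    :
    IsGOMetric 𝔨₁ (𝔰.toSubmodule ⊔ 𝔪) Λ ↔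
      ∃ c : ℝ, 0 < c ∧ ∀ x ∈ 𝔰.toSubmodule ⊔ 𝔪, Λ x = c • x := by
  refine ⟨fun hGO => ?_, fun ⟨_, _, hc⟩ => isGOMetric_of_eqOn_smul hc⟩
  subst hmsum
  have h𝔰 : ∀ z ∈ 𝔰, ∀ c ∈ 𝔨, ⁅z, c⁆ = 0 := fun z hz c hc => (h𝔨cent c).mp hc z hz
  have hdec : IsOrthogonalDecomposition 𝔨 m₁ m₂ :=
    ⟨by rw [sup_assoc, h𝔪compl.sup_eq_top], fun x hx y hy => h𝔪orth x hx y (hmsub₁ hy),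
      fun x hx y hy => h𝔪orth x hx y (hmsub₂ hy), hmorth, hmirr₁.1, hmirr₂.1⟩
  have h𝔪n : m₁ ⊔ m₂ ≤ 𝔰.toSubmodule ⊔ (m₁ ⊔ m₂) := le_sup_right
  have hΛ𝔨 : ∀ c ∈ 𝔨, ∀ x ∈ 𝔰.toSubmodule ⊔ (m₁ ⊔ m₂), Λ ⁅c, x⁆ = ⁅c, Λ x⁆ := fun c hc x hx =>
    hGO.apply_lie_eq hcompact h𝔨₁𝔨 h𝔪orth h𝔪n (fun c hc x hx => h𝔪inv.lie_mem_of_mem_sup h𝔰 hc hx)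
      hΛ𝔫 hΛsym hΛequiv hc hx
  have hΛ𝔰 : ∀ s ∈ 𝔰, Λ s ∈ 𝔰 := fun s hs =>
    apply_mem_of_mem_of_centralizer h𝔨cent h𝔰𝔨 h𝔪compl.disjoint hΛ𝔫 hΛ𝔨 hs
  obtain ⟨⟨c₁, hc₁⟩, ⟨c₂, hc₂⟩⟩ := hdec.exists_eqOn_smul hcompact hmirr₁ hmirr₂ hmineq
    (fun u hu => apply_mem_of_mem_of_orthogonal hcompact h𝔰𝔨 h𝔪orth hΛ𝔫 hΛsym hΛ𝔰 hu)
    (fun u hu v hv => hΛsym u (h𝔪n hu) v (h𝔪n hv)) (fun c hc u hu => hΛ𝔨 c hc u (h𝔪n hu))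
  obtain ⟨z, hz⟩ := hdec.exists_toSubmodule_eq_span hcompact h𝔰𝔨 h𝔰 hmirr₁ hmirr₂ hconv
  have hz𝔰 : z ∈ 𝔰 := (hz.ge (Submodule.mem_span_singleton_self z) :)
  obtain ⟨σ, hσ⟩ := Submodule.mem_span_singleton.mp (hz.le (hΛ𝔰 z hz𝔰))
  have hσc : ∀ {m c}, m ≤ m₁ ⊔ m₂ → AdIrreducible 𝔨 m → AdReducible 𝔨₁ m →
      (∀ u ∈ m, Λ u = c • u) → σ = c := fun hm hirr hred hc =>
    hGO.eq_of_adReducible (hz ▸ h𝔨sum.symm) (h𝔪compl.disjoint.mono h𝔨₁𝔨 hm)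
      (Submodule.mem_sup_left hz𝔰) (hm.trans h𝔪n) (fun a ha => h𝔰 z hz𝔰 a (h𝔨₁𝔨 ha)) hirr hred
      hσ.symm hc
  obtain rfl := hσc hmsub₁ hmirr₁ hred₁ hc₁
  obtain rfl := hσc hmsub₂ hmirr₂ hred₂ hc₂
  refine ⟨σ, pos_of_eqOn_smul hcompact hΛpos hmirr₁.2.1 (hmsub₁.trans h𝔪n) hc₁, fun x hx =>
    Module.End.mem_eigenspace_iff.mp ((?_ : _ ≤ Module.End.eigenspace Λ σ) hx)⟩
  rw [hz]
  exact sup_le ((Submodule.span_singleton_le_iff_mem _ _).mpr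
    (Module.End.mem_eigenspace_iff.mpr hσ.symm)) (sup_le
      (fun u hu => Module.End.mem_eigenspace_iff.mpr (hc₁ u hu))
      (fun u hu => Module.End.mem_eigenspace_iff.mpr (hc₂ u hu)))

/-- **Theorem 2, part 3)** (Arvanitoyeorgos–Wang–Zhao).
Let `G/K` be a generalized flag manifold with two isotropy summands `𝔪 = 𝔪₁ ⊕ 𝔪₂`
(with `[𝔪₁, 𝔪₁] ⊆ 𝔨 ⊕ 𝔪₂`) and `G/K₁` the corresponding `M`-space.  If both `𝔪₁` and
`𝔪₂` are reducible as `Ad(K₁)`-modules, then `(G/K₁, g)` is a g.o. space if and only if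
`g` is the standard metric (generated by `B(·,·)`, up to a positive scale). -/
theorem goMetric_iff_standard_of_two_summands_both_reducible
    {𝔤 : Type*} [LieRing 𝔤] [LieAlgebra ℝ 𝔤] [FiniteDimensional ℝ 𝔤]
    -- `G` is a compact simple Lie group: `𝔤` is simple with negative definite Killing form
    [LieAlgebra.IsSimple ℝ 𝔤]
    (hcompact : ∀ x : 𝔤, x ≠ 0 → killingForm ℝ 𝔤 x x < 0)
    (𝔨 𝔨₁ 𝔰 : LieSubalgebra ℝ 𝔤)
    -- `S` is a torus in `G` and `K = C(S)` is its centralizer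
    (h𝔰ab : ∀ x ∈ 𝔰, ∀ y ∈ 𝔰, ⁅x, y⁆ = (0 : 𝔤))
    (h𝔨cent : ∀ x : 𝔤, x ∈ 𝔨 ↔ ∀ s ∈ 𝔰, ⁅s, x⁆ = 0)
    -- `K = S × K₁`, `K₁` being the semisimple part of `K`
    (h𝔰𝔨 : 𝔰 ≤ 𝔨) (h𝔨₁𝔨 : 𝔨₁ ≤ 𝔨)
    (h𝔨sum : 𝔰.toSubmodule ⊔ 𝔨₁.toSubmodule = 𝔨.toSubmodule)
    (h𝔨disj : Disjoint 𝔰.toSubmodule 𝔨₁.toSubmodule)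
    (h𝔰𝔨₁ : ∀ s ∈ 𝔰, ∀ k ∈ 𝔨₁, ⁅s, k⁆ = (0 : 𝔤))
    (hder : ∀ x ∈ 𝔨, ∀ y ∈ 𝔨, ⁅x, y⁆ ∈ 𝔨₁)
    -- the `B`-orthogonal reductive decomposition `𝔤 = 𝔨 ⊕ 𝔪`, where `B = -Killing form`
    (𝔪 : Submodule ℝ 𝔤)
    (h𝔪compl : IsCompl 𝔨.toSubmodule 𝔪)
    (h𝔪orth : ∀ x ∈ 𝔨, ∀ y ∈ 𝔪, killingForm ℝ 𝔤 x y = 0)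
    (h𝔪inv : AdInvariant 𝔨 𝔪)
    -- the decomposition `𝔪 = 𝔪₁ ⊕ 𝔪₂`, `B`-orthogonal, into two pairwise inequivalent
    -- irreducible `Ad(K)`-submodules, with the convention `[𝔪₁, 𝔪₁] ⊆ 𝔨 ⊕ 𝔪₂`
    (m₁ m₂ : Submodule ℝ 𝔤)
    (hmsub₁ : m₁ ≤ 𝔪) (hmsub₂ : m₂ ≤ 𝔪)
    (hmsum : m₁ ⊔ m₂ = 𝔪)
    (hmorth : ∀ x ∈ m₁, ∀ y ∈ m₂, killingForm ℝ 𝔤 x y = 0)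
    (hmirr₁ : AdIrreducible 𝔨 m₁) (hmirr₂ : AdIrreducible 𝔨 m₂)
    (hmineq : ¬ AdEquiv 𝔨 m₁ m₂)
    (hconv : ∀ x ∈ m₁, ∀ y ∈ m₁, ⁅x, y⁆ ∈ 𝔨.toSubmodule ⊔ m₂)
    -- both `𝔪₁` and `𝔪₂` are reducible as `Ad(K₁)`-modules
    (hred₁ : AdReducible 𝔨₁ m₁) (hred₂ : AdReducible 𝔨₁ m₂)
    -- `Λ` is the associated operator of the `G`-invariant metric `g` on the `M`-space
    -- `G/K₁`, whose tangent space at the origin is `𝔫 = 𝔰 ⊕ 𝔪`: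
    -- positive definite, symmetric w.r.t. `B = -Killing`, and `Ad(K₁)`-equivariant
    (Λ : 𝔤 →ₗ[ℝ] 𝔤)
    (hΛ𝔫 : ∀ x ∈ 𝔰.toSubmodule ⊔ 𝔪, Λ x ∈ 𝔰.toSubmodule ⊔ 𝔪)
    (hΛsym : ∀ x ∈ 𝔰.toSubmodule ⊔ 𝔪, ∀ y ∈ 𝔰.toSubmodule ⊔ 𝔪,
      killingForm ℝ 𝔤 (Λ x) y = killingForm ℝ 𝔤 x (Λ y))
    (hΛpos : ∀ x ∈ 𝔰.toSubmodule ⊔ 𝔪, x ≠ 0 → 0 < -(killingForm ℝ 𝔤 (Λ x) x))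
    (hΛequiv : ∀ k ∈ 𝔨₁, ∀ x ∈ 𝔰.toSubmodule ⊔ 𝔪, Λ ⁅k, x⁆ = ⁅k, Λ x⁆)
    :
    IsGOMetric 𝔨₁ (𝔰.toSubmodule ⊔ 𝔪) Λ ↔
      ∃ c : ℝ, 0 < c ∧ ∀ x ∈ 𝔰.toSubmodule ⊔ 𝔪, Λ x = c • x :=
  goMetric_iff_standard_of_two_summands_both_reducible_general hcompact 𝔨 𝔨₁ 𝔰 h𝔨cent h𝔰𝔨 h𝔨₁𝔨 h𝔨sum
    𝔪 h𝔪compl h𝔪orth h𝔪inv m₁ m₂ hmsub₁ hmsub₂ hmsum hmorth hmirr₁ hmirr₂ hmineq hconv hred₁ hred₂ Λ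
    hΛ𝔫 hΛsym hΛpos hΛequiv
end

section
/- Let G/K be a generalized flag manifold with exactly two isotropy summands 𝔪 = 𝔪₁ ⊕ 𝔪₂ and dim 𝔪₂ = 2. Then the corresponding M-space (G/K₁, g), where g = ⟨·,·⟩ = μ B(·,·)|_{𝔰 ⊕ 𝔪₂} + μ₁ B(·,·)|_{𝔪₁}, is a g.o. space for every μ ≠ μ₁ if and only if for every V ∈ 𝔰, every X₁ ∈ 𝔪₁ and every X₂ ∈ 𝔪₂ there exists k ∈ 𝔨₁ such that [k + V + X₂, X₁] = 0. -/
open Module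

/-!
The algebra `𝔨` acts on the Killing-orthonormal plane `𝔪₂` by infinitesimal rotations, so the
action factors through the abelian `𝔰𝔬(2)` and `[𝔨, 𝔨]` acts trivially on `𝔪₂`. Invariance of the
Killing form then gives `[𝔪₂, 𝔪₂] ⊆ 𝔨` and `[𝔪₁, 𝔪₂] ⊆ 𝔪₁`. A nonzero central element of `𝔨`
acts injectively on `𝔪₁`: if it killed a vector it would kill all of `𝔪₁` by irreducibility, and
then it would either be central in `𝔤` or force `[𝔪₁, 𝔪₂] = 0`, making `𝔪₂ + [𝔪₂, 𝔪₂]` a proper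
ideal. Two commuting skew operators on `𝔪₁`, one of them invertible, satisfy `A v = t S v` for
some `v ≠ 0`, so the centre of `𝔨` is the line `𝔰`; hence `𝔨₁ = [𝔨, 𝔨]` centralises `𝔰 ⊕ 𝔪₂`.

For `x = Y + X` with `Y ∈ 𝔰 ⊕ 𝔪₂`, `X ∈ 𝔪₁` and `a ∈ 𝔨₁` this yields
`[a + x, Λ x] = [μ₁ a + (μ₁ - μ) Y, X] ∈ 𝔪₁`, so the g.o. condition `[a + x, Λ x] ∈ 𝔨₁` says
exactly that this bracket vanishes, which after rescaling `Y` is the stated condition.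
-/

section KillingForm

variable {𝔤 : Type*} [LieRing 𝔤] [LieAlgebra ℝ 𝔤]

local notation "κ" => killingForm ℝ 𝔤

lemma eq_zero_of_killingForm_self_eq_zero_s5 (hκ : ∀ x : 𝔤, x ≠ 0 → κ x x < 0) {x : 𝔤}
    (hx : κ x x = 0) : x = 0 := by
  by_contra h
  exact (hκ x h).ne hx

lemma mem_of_forall_killingForm_eq_zero (hκ : ∀ x : 𝔤, x ≠ 0 → κ x x < 0)
    {Q R : Submodule ℝ 𝔤} (hQR : Codisjoint Q R) (horth : ∀ x ∈ Q, ∀ y ∈ R, κ x y = 0)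
    {y : 𝔤} (hy : ∀ z ∈ R, κ y z = 0) : y ∈ Q := by
  obtain ⟨q, hq, r, hr, rfl⟩ := Submodule.mem_sup.mp (hQR.eq_top ▸ Submodule.mem_top (x := y))
  have hr₀ : r = 0 := by
    refine eq_zero_of_killingForm_self_eq_zero_s5 hκ ?_
    simpa [horth q hq r hr] using hy r hr
  simpa [hr₀] using hq

variable [FiniteDimensional ℝ 𝔤]

lemma isCompl_killingForm_orthogonal (hκ : ∀ x : 𝔤, x ≠ 0 → κ x x < 0) (W : Submodule ℝ 𝔤) :
    IsCompl W ((killingForm ℝ 𝔤).orthogonal W) := by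
  refine (LinearMap.BilinForm.isCompl_orthogonal_iff_disjoint
    (LieModule.traceForm_isSymm ℝ 𝔤 𝔤).isRefl).mpr ?_
  refine Submodule.disjoint_def.mpr fun x hxW hx => ?_
  exact eq_zero_of_killingForm_self_eq_zero_s5 hκ (hx x hxW)

noncomputable abbrev killingInnerProductCore (hκ : ∀ x : 𝔤, x ≠ 0 → κ x x < 0) :
    InnerProductSpace.Core ℝ 𝔤 where
  inner x y := -κ x y
  conj_inner_symm x y := by simp [LieModule.traceForm_comm ℝ 𝔤 𝔤 x y]
  re_inner_nonneg x := by
    rcases eq_or_ne x 0 with rfl | hx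
    · simp
    · simpa using (hκ x hx).le
  add_left x y z := by simp only [map_add, LinearMap.add_apply, neg_add]
  smul_left x y r := by simp
  definite x hx := eq_zero_of_killingForm_self_eq_zero_s5 hκ (neg_eq_zero.mp hx)

lemma exists_killingForm_orthonormal_pair (hκ : ∀ x : 𝔤, x ≠ 0 → κ x x < 0)
    {W : Submodule ℝ 𝔤} (hW : finrank ℝ W = 2) :
    ∃ e₁ e₂ : 𝔤, κ e₁ e₁ = -1 ∧ κ e₂ e₂ = -1 ∧ κ e₁ e₂ = 0 ∧
      W = Submodule.span ℝ {e₁, e₂} := by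
  let _ := (killingInnerProductCore hκ).toNormedAddCommGroup
  let _ := InnerProductSpace.ofCore (killingInnerProductCore hκ).toCore
  let b := (stdOrthonormalBasis ℝ W).reindex (finCongr hW)
  have hb : ∀ i j, κ (b i) (b j) = -if i = j then 1 else 0 := fun i j => by
    rw [← orthonormal_iff_ite.mp b.orthonormal i j]; exact (neg_neg _).symm
  refine ⟨b 0, b 1, by simpa using hb 0 0, by simpa using hb 1 1, by simpa using hb 0 1, ?_⟩
  refine le_antisymm (fun x hx => ?_) ?_
  · rw [Submodule.mem_span_pair]
    refine ⟨b.repr ⟨x, hx⟩ 0, b.repr ⟨x, hx⟩ 1, ?_⟩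
    simpa [Fin.sum_univ_two] using congrArg Subtype.val (b.sum_repr ⟨x, hx⟩)
  · rw [Submodule.span_le, Set.insert_subset_iff, Set.singleton_subset_iff]
    exact ⟨(b 0).2, (b 1).2⟩

end KillingForm

theorem exists_apply_eq_smul_apply_of_skew {E : Type*} [NormedAddCommGroup E]
    [InnerProductSpace ℝ E] [FiniteDimensional ℝ E] [Nontrivial E] {S A : E →ₗ[ℝ] E}
    (hS : ∀ u w, inner ℝ (S u) w = -inner ℝ u (S w))
    (hA : ∀ u w, inner ℝ (A u) w = -inner ℝ u (A w))
    (hSA : S ∘ₗ A = A ∘ₗ S) (hSinj : Function.Injective S) :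
    ∃ (t : ℝ) (v : E), v ≠ 0 ∧ A v = t • S v := by
  let S' := LinearEquiv.ofInjectiveEndo S hSinj
  have hSS' : ∀ u, S (S'.symm u) = u := S'.apply_symm_apply
  have hS'skew : ∀ u w, inner ℝ (S'.symm u) w = -inner ℝ u (S'.symm w) := fun u w => by
    have h := hS (S'.symm u) (S'.symm w)
    rw [hSS', hSS'] at h
    linarith
  have hS'A : ∀ u, S'.symm (A u) = A (S'.symm u) := fun u => by
    apply S'.injective
    change S (S'.symm (A u)) = S (A (S'.symm u))
    rw [hSS', ← LinearMap.comp_apply, hSA, LinearMap.comp_apply, hSS']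
  have hT : (S'.symm.toLinearMap ∘ₗ A).IsSymmetric := fun u w => by
    simp only [LinearMap.comp_apply, LinearEquiv.coe_coe, hS'skew, hA, hS'A, neg_neg]
  obtain ⟨t, ht⟩ : ∃ t : ℝ, Module.End.HasEigenvalue (S'.symm.toLinearMap ∘ₗ A) t :=
    ⟨_, hT.hasEigenvalue_iSup_of_finiteDimensional⟩
  obtain ⟨v, hv⟩ := ht.exists_hasEigenvector
  refine ⟨t, v, hv.2, ?_⟩
  simpa [hSS'] using congrArg S hv.apply_eq_smul

section Plane

variable {𝔤 : Type*} [LieRing 𝔤] [LieAlgebra ℝ 𝔤] {e₁ e₂ : 𝔤}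

local notation "κ" => killingForm ℝ 𝔤

open Submodule

lemma eq_sub_of_mem_span_pair (h₁ : κ e₁ e₁ = -1) (h₂ : κ e₂ e₂ = -1) (h₁₂ : κ e₁ e₂ = 0)
    {y : 𝔤} (hy : y ∈ span ℝ {e₁, e₂}) : y = -κ y e₁ • e₁ - κ y e₂ • e₂ := by
  obtain ⟨a, c, rfl⟩ := mem_span_pair.mp hy
  simp only [map_add, map_smul, LinearMap.add_apply, LinearMap.smul_apply, smul_eq_mul, h₁, h₂,
    h₁₂, LieModule.traceForm_comm ℝ 𝔤 𝔤 e₂ e₁]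
  module

lemma lie_mem_span_singleton_of_mem_span_pair {x y : 𝔤} (hx : x ∈ span ℝ {e₁, e₂})
    (hy : y ∈ span ℝ {e₁, e₂}) : ⁅x, y⁆ ∈ ℝ ∙ ⁅e₁, e₂⁆ := by
  obtain ⟨a, c, rfl⟩ := mem_span_pair.mp hx
  obtain ⟨a', c', rfl⟩ := mem_span_pair.mp hy
  refine mem_span_singleton.mpr ⟨a * c' - c * a', ?_⟩
  simp only [lie_add, add_lie, lie_smul, smul_lie, lie_self, ← lie_skew e₁ e₂]
  module

lemma exists_lie_eq_smul_of_mem_span_pair (h₁ : κ e₁ e₁ = -1) (h₂ : κ e₂ e₂ = -1)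
    (h₁₂ : κ e₁ e₂ = 0) {b : 𝔤}
    (hb : ∀ x ∈ span ℝ {e₁, e₂}, ⁅b, x⁆ ∈ span ℝ {e₁, e₂}) :
    ∃ c : ℝ, ⁅b, e₁⁆ = c • e₂ ∧ ⁅b, e₂⁆ = -c • e₁ := by
  have hself : ∀ e, κ ⁅b, e⁆ e = 0 := fun e => by
    rw [LieModule.traceForm_apply_lie_apply, lie_self, map_zero]
  have hswap : κ ⁅b, e₂⁆ e₁ = -κ ⁅b, e₁⁆ e₂ := by
    rw [LieModule.traceForm_apply_lie_apply', LieModule.traceForm_comm ℝ 𝔤 𝔤 e₂]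
  refine ⟨-κ ⁅b, e₁⁆ e₂, ?_, ?_⟩
  · refine (eq_sub_of_mem_span_pair h₁ h₂ h₁₂ (hb e₁ (subset_span (by simp)))).trans ?_
    rw [hself]
    module
  · refine (eq_sub_of_mem_span_pair h₁ h₂ h₁₂ (hb e₂ (subset_span (by simp)))).trans ?_
    rw [hself, hswap]
    module

variable [FiniteDimensional ℝ 𝔤] {W : Submodule ℝ 𝔤}

lemma lie_lie_mem_eq_zero_of_finrank_eq_two (hκ : ∀ x : 𝔤, x ≠ 0 → κ x x < 0)
    (hW : finrank ℝ W = 2) {b : 𝔤} (hb : ∀ x ∈ W, ⁅b, x⁆ ∈ W) {x y : 𝔤} (hx : x ∈ W)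
    (hy : y ∈ W) : ⁅b, ⁅x, y⁆⁆ = 0 := by
  obtain ⟨e₁, e₂, h₁, h₂, h₁₂, rfl⟩ := exists_killingForm_orthonormal_pair hκ hW
  obtain ⟨c, hc₁, hc₂⟩ := exists_lie_eq_smul_of_mem_span_pair h₁ h₂ h₁₂ hb
  obtain ⟨r, hr⟩ := mem_span_singleton.mp (lie_mem_span_singleton_of_mem_span_pair hx hy)
  rw [← hr, lie_smul, leibniz_lie, hc₁, hc₂, smul_lie, lie_smul, lie_self, lie_self]
  simp

lemma killingForm_lie_eq_zero_of_finrank_eq_two (hκ : ∀ x : 𝔤, x ≠ 0 → κ x x < 0)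
    (hW : finrank ℝ W = 2) {x y z : 𝔤} (hx : x ∈ W) (hy : y ∈ W) (hz : z ∈ W) :
    κ ⁅x, y⁆ z = 0 := by
  obtain ⟨e₁, e₂, -, -, -, rfl⟩ := exists_killingForm_orthonormal_pair hκ hW
  obtain ⟨r, hr⟩ := mem_span_singleton.mp (lie_mem_span_singleton_of_mem_span_pair hx hy)
  obtain ⟨a, c, rfl⟩ := mem_span_pair.mp hz
  rw [← hr]
  simp only [map_add, map_smul, LinearMap.smul_apply, LieModule.traceForm_apply_lie_apply,
    LieModule.traceForm_apply_lie_apply' ℝ 𝔤 𝔤 e₁ e₂ e₁, lie_self]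
  simp

lemma lie_lie_eq_zero_of_finrank_eq_two (hκ : ∀ x : 𝔤, x ≠ 0 → κ x x < 0)
    (hW : finrank ℝ W = 2) {b b' : 𝔤} (hb : ∀ x ∈ W, ⁅b, x⁆ ∈ W) (hb' : ∀ x ∈ W, ⁅b', x⁆ ∈ W)
    {x : 𝔤} (hx : x ∈ W) : ⁅⁅b, b'⁆, x⁆ = 0 := by
  obtain ⟨e₁, e₂, h₁, h₂, h₁₂, rfl⟩ := exists_killingForm_orthonormal_pair hκ hW
  obtain ⟨c, hc₁, hc₂⟩ := exists_lie_eq_smul_of_mem_span_pair h₁ h₂ h₁₂ hb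
  obtain ⟨c', hc₁', hc₂'⟩ := exists_lie_eq_smul_of_mem_span_pair h₁ h₂ h₁₂ hb'
  obtain ⟨a, d, rfl⟩ := mem_span_pair.mp hx
  simp only [lie_lie, lie_add, lie_smul, hc₁, hc₂, hc₁', hc₂']
  module

lemma forall_lie_eq_zero_or_forall_exists_lie_eq (hκ : ∀ x : 𝔤, x ≠ 0 → κ x x < 0)
    (hW : finrank ℝ W = 2) {b : 𝔤} (hb : ∀ x ∈ W, ⁅b, x⁆ ∈ W) :
    (∀ x ∈ W, ⁅b, x⁆ = 0) ∨ ∀ y ∈ W, ∃ x ∈ W, ⁅b, x⁆ = y := by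
  obtain ⟨e₁, e₂, h₁, h₂, h₁₂, rfl⟩ := exists_killingForm_orthonormal_pair hκ hW
  obtain ⟨c, hc₁, hc₂⟩ := exists_lie_eq_smul_of_mem_span_pair h₁ h₂ h₁₂ hb
  rcases eq_or_ne c 0 with rfl | hc
  · left
    intro x hx
    obtain ⟨a, d, rfl⟩ := mem_span_pair.mp hx
    simp [hc₁, hc₂]
  · right
    intro y hy
    obtain ⟨a, d, rfl⟩ := mem_span_pair.mp hy
    refine ⟨(d / c) • e₁ - (a / c) • e₂, mem_span_pair.mpr ⟨d / c, -(a / c), by module⟩, ?_⟩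
    simp only [lie_sub, lie_smul, hc₁, hc₂, neg_smul, smul_neg, smul_smul, div_mul_cancel₀ _ hc]
    module

end Plane

section Isotropy

variable {𝔤 : Type*} [LieRing 𝔤] [LieAlgebra ℝ 𝔤] {𝔨 : LieSubalgebra ℝ 𝔤}

local notation "κ" => killingForm ℝ 𝔤

open Submodule

lemma AdIrreducible.eq_of_le_of_mem {m U : Submodule ℝ 𝔤} (hm : AdIrreducible 𝔨 m)
    (hUm : U ≤ m) (hU : AdInvariant 𝔨 U) {y : 𝔤} (hy : y ∈ U) (hy₀ : y ≠ 0) : U = m :=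
  (hm.2.2 U hUm hU).resolve_left fun hU₀ => hy₀ (by simpa [hU₀] using hy)

lemma killingForm_eq_zero_of_forall_lie_eq_zero {m : Submodule ℝ 𝔤} (hm : AdIrreducible 𝔨 m)
    (hfix : ∀ y ∈ m, (∀ b ∈ 𝔨, ⁅b, y⁆ = 0) → y = 0) {z : 𝔤} (hz : ∀ b ∈ 𝔨, ⁅b, z⁆ = 0)
    {x : 𝔤} (hx : x ∈ m) : κ x z = 0 := by
  have hbracket : ∀ b ∈ 𝔨, ∀ y ∈ m, ⁅b, y⁆ ∈ m ⊓ LinearMap.ker (κ z) := fun b hb y hy => by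
    refine ⟨hm.1 b hb y hy, ?_⟩
    change κ z ⁅b, y⁆ = 0
    rw [← LieModule.traceForm_apply_lie_apply, ← lie_skew, hz b hb, neg_zero,
      map_zero, LinearMap.zero_apply]
  obtain ⟨y, hy, hy₀⟩ := (Submodule.ne_bot_iff m).mp hm.2.1
  obtain ⟨b, hb, hby⟩ : ∃ b ∈ 𝔨, ⁅b, y⁆ ≠ 0 := by
    by_contra! h
    exact hy₀ (hfix y hy h)
  have hU := hm.eq_of_le_of_mem inf_le_left (fun b hb w hw => hbracket b hb w hw.1)
    (hbracket b hb y hy) hby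
  rw [LieModule.traceForm_comm]
  exact (hU.ge hx).2

/-- The isotropy decomposition `𝔤 = 𝔨 ⊕ 𝔪₁ ⊕ 𝔪₂` of a generalized flag manifold with two
isotropy summands and `dim 𝔪₂ = 2`; `no_fixed_m₁` is how `K = C(S)` enters. -/
structure IsIsotropyDecomposition (𝔨 : LieSubalgebra ℝ 𝔤) (m₁ m₂ : Submodule ℝ 𝔤) : Prop where
  isCompl : IsCompl 𝔨.toSubmodule (m₁ ⊔ m₂)
  killingForm_k_m₁ : ∀ x ∈ 𝔨, ∀ y ∈ m₁, κ x y = 0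
  killingForm_k_m₂ : ∀ x ∈ 𝔨, ∀ y ∈ m₂, κ x y = 0
  killingForm_m₁_m₂ : ∀ x ∈ m₁, ∀ y ∈ m₂, κ x y = 0
  irreducible_m₁ : AdIrreducible 𝔨 m₁
  no_fixed_m₁ : ∀ y ∈ m₁, (∀ b ∈ 𝔨, ⁅b, y⁆ = 0) → y = 0
  invariant_m₂ : AdInvariant 𝔨 m₂
  finrank_m₂ : finrank ℝ m₂ = 2

namespace IsIsotropyDecomposition

variable {m₁ m₂ : Submodule ℝ 𝔤}

lemma exists_eq_add_add (hd : IsIsotropyDecomposition 𝔨 m₁ m₂) (y : 𝔤) :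
    ∃ b ∈ 𝔨, ∃ y₁ ∈ m₁, ∃ y₂ ∈ m₂, y = b + y₁ + y₂ := by
  obtain ⟨b, hb, z, hz, rfl⟩ := mem_sup.mp (hd.isCompl.sup_eq_top ▸ mem_top (x := y))
  obtain ⟨y₁, hy₁, y₂, hy₂, rfl⟩ := mem_sup.mp hz
  exact ⟨b, hb, y₁, hy₁, y₂, hy₂, (add_assoc _ _ _).symm⟩

lemma killingForm_k_sup (hd : IsIsotropyDecomposition 𝔨 m₁ m₂) :
    ∀ x ∈ 𝔨, ∀ z ∈ m₁ ⊔ m₂, κ x z = 0 := fun x hx =>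
  (forall_mem_sup _ _).mpr fun y₁ hy₁ y₂ hy₂ => by
    rw [map_add, hd.killingForm_k_m₁ x hx y₁ hy₁, hd.killingForm_k_m₂ x hx y₂ hy₂, add_zero]

lemma killingForm_m₁_sup (hd : IsIsotropyDecomposition 𝔨 m₁ m₂) :
    ∀ x ∈ m₁, ∀ z ∈ 𝔨.toSubmodule ⊔ m₂, κ x z = 0 := fun x hx =>
  (forall_mem_sup _ _).mpr fun b hb y₂ hy₂ => by
    rw [map_add, LieModule.traceForm_comm, hd.killingForm_k_m₁ b hb x hx,
      hd.killingForm_m₁_m₂ x hx y₂ hy₂, add_zero]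

lemma isCompl_m₁ (hκ : ∀ x : 𝔤, x ≠ 0 → κ x x < 0) (hd : IsIsotropyDecomposition 𝔨 m₁ m₂) :
    IsCompl m₁ (𝔨.toSubmodule ⊔ m₂) := by
  refine ⟨disjoint_def.mpr fun y hy₁ hy => ?_, codisjoint_iff.mpr ?_⟩
  · exact eq_zero_of_killingForm_self_eq_zero_s5 hκ (hd.killingForm_m₁_sup y hy₁ y hy)
  · rw [sup_left_comm, hd.isCompl.sup_eq_top]

variable [FiniteDimensional ℝ 𝔤]

lemma lie_mem_k (hκ : ∀ x : 𝔤, x ≠ 0 → κ x x < 0) (hd : IsIsotropyDecomposition 𝔨 m₁ m₂)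
    {x y : 𝔤} (hx : x ∈ m₂) (hy : y ∈ m₂) : ⁅x, y⁆ ∈ 𝔨 := by
  refine mem_of_forall_killingForm_eq_zero hκ hd.isCompl.codisjoint hd.killingForm_k_sup
    ((forall_mem_sup _ _).mpr fun z₁ hz₁ z₂ hz₂ => ?_)
  have hfixed : ∀ b ∈ 𝔨, ⁅b, ⁅x, y⁆⁆ = 0 := fun b hb =>
    lie_lie_mem_eq_zero_of_finrank_eq_two hκ hd.finrank_m₂ (hd.invariant_m₂ b hb) hx hy
  rw [map_add, LieModule.traceForm_comm,
    killingForm_eq_zero_of_forall_lie_eq_zero hd.irreducible_m₁ hd.no_fixed_m₁ hfixed hz₁,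
    killingForm_lie_eq_zero_of_finrank_eq_two hκ hd.finrank_m₂ hx hy hz₂, add_zero]

lemma lie_mem_m₁ (hκ : ∀ x : 𝔤, x ≠ 0 → κ x x < 0) (hd : IsIsotropyDecomposition 𝔨 m₁ m₂)
    {x y : 𝔤} (hx : x ∈ m₁) (hy : y ∈ m₂) : ⁅x, y⁆ ∈ m₁ := by
  refine mem_of_forall_killingForm_eq_zero hκ (hd.isCompl_m₁ hκ).codisjoint hd.killingForm_m₁_sup
    ((forall_mem_sup _ _).mpr fun b hb z hz => ?_)
  rw [map_add, LieModule.traceForm_apply_lie_apply, LieModule.traceForm_apply_lie_apply, ← lie_skew,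
    map_neg, hd.killingForm_m₁_m₂ x hx _ (hd.invariant_m₂ b hb y hy), LieModule.traceForm_comm,
    hd.killingForm_k_m₁ _ (hd.lie_mem_k hκ hy hz) x hx, neg_zero, add_zero]

lemma lie_mem_m₁_of_mem_sup (hκ : ∀ x : 𝔤, x ≠ 0 → κ x x < 0)
    (hd : IsIsotropyDecomposition 𝔨 m₁ m₂) :
    ∀ b ∈ 𝔨.toSubmodule ⊔ m₂, ∀ x ∈ m₁, ⁅b, x⁆ ∈ m₁ :=
  (forall_mem_sup _ _).mpr fun b hb y hy x hx => by
    rw [add_lie, ← lie_skew y]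
    exact add_mem (hd.irreducible_m₁.1 b hb x hx) (neg_mem (hd.lie_mem_m₁ hκ hx hy))

lemma exists_lie_ne_zero [LieAlgebra.IsSimple ℝ 𝔤] (hκ : ∀ x : 𝔤, x ≠ 0 → κ x x < 0)
    (hd : IsIsotropyDecomposition 𝔨 m₁ m₂) : ∃ x ∈ m₁, ∃ y ∈ m₂, ⁅x, y⁆ ≠ 0 := by
  -- otherwise `m₂ ⊔ ℝ ∙ ⁅e₁, e₂⁆` is a proper nonzero ideal
  by_contra! h
  obtain ⟨e₁, e₂, h₁, -, -, hm₂⟩ := exists_killingForm_orthonormal_pair hκ hd.finrank_m₂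
  have he₁ : e₁ ∈ m₂ := hm₂ ▸ subset_span (by simp)
  have he₂ : e₂ ∈ m₂ := hm₂ ▸ subset_span (by simp)
  have he₁₂ : ⁅e₁, e₂⁆ ∈ 𝔨 := hd.lie_mem_k hκ he₁ he₂
  have hP : ∀ y : 𝔤, ∀ w ∈ m₂ ⊔ ℝ ∙ ⁅e₁, e₂⁆, ⁅y, w⁆ ∈ m₂ ⊔ ℝ ∙ ⁅e₁, e₂⁆ := by
    intro y
    obtain ⟨b, hb, y₁, hy₁, y₂, hy₂, rfl⟩ := hd.exists_eq_add_add y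
    refine (forall_mem_sup _ _).mpr fun w hw h' hh' => ?_
    obtain ⟨c, rfl⟩ := mem_span_singleton.mp hh'
    have hy₁e : ⁅y₁, ⁅e₁, e₂⁆⁆ = 0 := by
      rw [leibniz_lie, h y₁ hy₁ e₁ he₁, h y₁ hy₁ e₂ he₂, zero_lie, lie_zero, add_zero]
    have hbe : ⁅b, ⁅e₁, e₂⁆⁆ = 0 :=
      lie_lie_mem_eq_zero_of_finrank_eq_two hκ hd.finrank_m₂ (hd.invariant_m₂ b hb) he₁ he₂
    simp only [add_lie, lie_add, lie_smul, h y₁ hy₁ w hw, hy₁e, hbe, add_zero, zero_add]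
    refine add_mem (add_mem (mem_sup_left (hd.invariant_m₂ b hb w hw)) (mem_sup_right ?_))
      (smul_mem _ _ (mem_sup_left ?_))
    · exact lie_mem_span_singleton_of_mem_span_pair (hm₂ ▸ hy₂) (hm₂ ▸ hw)
    · rw [← lie_skew]
      exact neg_mem (hd.invariant_m₂ _ he₁₂ y₂ hy₂)
  let I : LieIdeal ℝ 𝔤 := { m₂ ⊔ ℝ ∙ ⁅e₁, e₂⁆ with lie_mem := fun {y w} hw => hP y w hw }
  rcases LieAlgebra.IsSimple.eq_bot_or_eq_top I with hI | hI
  · have he₁I : e₁ ∈ I := mem_sup_left he₁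
    rw [hI, LieSubmodule.mem_bot] at he₁I
    simp [he₁I] at h₁
  · obtain ⟨v, hv, hv₀⟩ := (Submodule.ne_bot_iff m₁).mp hd.irreducible_m₁.2.1
    have hvP : v ∈ m₂ ⊔ ℝ ∙ ⁅e₁, e₂⁆ := (hI ▸ LieSubmodule.mem_top v : v ∈ I)
    have hP_le : m₂ ⊔ ℝ ∙ ⁅e₁, e₂⁆ ≤ 𝔨.toSubmodule ⊔ m₂ :=
      sup_le le_sup_right (span_singleton_le_iff_mem _ _ |>.mpr (mem_sup_left he₁₂))
    exact hv₀ (disjoint_def.mp (hd.isCompl_m₁ hκ).disjoint v hv (hP_le hvP))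

lemma eq_zero_of_lie_eq_zero [LieAlgebra.IsSimple ℝ 𝔤] (hκ : ∀ x : 𝔤, x ≠ 0 → κ x x < 0)
    (hd : IsIsotropyDecomposition 𝔨 m₁ m₂) {ξ : 𝔤} (hξ : ξ ∈ 𝔨) (hξc : ∀ b ∈ 𝔨, ⁅ξ, b⁆ = 0)
    {v : 𝔤} (hv : v ∈ m₁) (hv₀ : v ≠ 0) (hξv : ⁅ξ, v⁆ = 0) : ξ = 0 := by
  have hξm₁ : ∀ x ∈ m₁, ⁅ξ, x⁆ = 0 := by
    have hU : AdInvariant 𝔨 (m₁ ⊓ LinearMap.ker (LieAlgebra.ad ℝ 𝔤 ξ)) := fun b hb w hw =>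
      ⟨hd.irreducible_m₁.1 b hb w hw.1, by
        change ⁅ξ, ⁅b, w⁆⁆ = 0
        rw [leibniz_lie, hξc b hb, show ⁅ξ, w⁆ = 0 from hw.2, zero_lie, lie_zero, add_zero]⟩
    intro x hx
    exact (hd.irreducible_m₁.eq_of_le_of_mem inf_le_left hU ⟨hv, hξv⟩ hv₀).ge hx |>.2
  rcases forall_lie_eq_zero_or_forall_exists_lie_eq hκ hd.finrank_m₂ (hd.invariant_m₂ ξ hξ)
    with hξm₂ | hsurj
  · have hcenter : ξ ∈ LieAlgebra.center ℝ 𝔤 := by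
      rw [LieAlgebra.center, LieModule.mem_maxTrivSubmodule]
      intro y
      obtain ⟨b, hb, y₁, hy₁, y₂, hy₂, rfl⟩ := hd.exists_eq_add_add y
      rw [← lie_skew, lie_add, lie_add, hξc b hb, hξm₁ y₁ hy₁, hξm₂ y₂ hy₂]
      simp
    simpa using hcenter
  · exfalso
    obtain ⟨x, hx, y, hy, hxy⟩ := hd.exists_lie_ne_zero hκ
    obtain ⟨z, hz, rfl⟩ := hsurj y hy
    apply hxy
    have h := leibniz_lie ξ x z
    rw [hξm₁ _ (hd.lie_mem_m₁ hκ hx hz), hξm₁ x hx, zero_lie, zero_add] at h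
    exact h.symm

lemma exists_eq_smul_of_lie_eq_zero [LieAlgebra.IsSimple ℝ 𝔤]
    (hκ : ∀ x : 𝔤, x ≠ 0 → κ x x < 0) (hd : IsIsotropyDecomposition 𝔨 m₁ m₂) {s ζ : 𝔤}
    (hs : s ∈ 𝔨) (hsc : ∀ b ∈ 𝔨, ⁅s, b⁆ = 0) (hs₀ : s ≠ 0) (hζ : ζ ∈ 𝔨)
    (hζc : ∀ b ∈ 𝔨, ⁅ζ, b⁆ = 0) : ∃ t : ℝ, ζ = t • s := by
  let _ := (killingInnerProductCore hκ).toNormedAddCommGroup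
  let _ := InnerProductSpace.ofCore (killingInnerProductCore hκ).toCore
  have : Nontrivial m₁ := nontrivial_iff_ne_bot.mpr hd.irreducible_m₁.2.1
  let ad₁ (a : 𝔤) (ha : a ∈ 𝔨) : m₁ →ₗ[ℝ] m₁ :=
    (LieAlgebra.ad ℝ 𝔤 a).restrict (hd.irreducible_m₁.1 a ha)
  have hskew (a : 𝔤) (ha : a ∈ 𝔨) (u w : m₁) :
      inner ℝ (ad₁ a ha u) w = -inner ℝ u (ad₁ a ha w) :=
    show -κ ⁅a, (u : 𝔤)⁆ w = -(-κ u ⁅a, (w : 𝔤)⁆) by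
      rw [LieModule.traceForm_apply_lie_apply', neg_neg]
  have hcomm : ad₁ s hs ∘ₗ ad₁ ζ hζ = ad₁ ζ hζ ∘ₗ ad₁ s hs := LinearMap.ext fun u =>
    Subtype.ext (show ⁅s, ⁅ζ, (u : 𝔤)⁆⁆ = ⁅ζ, ⁅s, (u : 𝔤)⁆⁆ by
      rw [leibniz_lie, hsc ζ hζ, zero_lie, zero_add])
  have hinj : Function.Injective (ad₁ s hs) := fun u w huw => by
    by_contra hne
    refine hs₀ (hd.eq_zero_of_lie_eq_zero hκ hs hsc (u - w).2 ?_ ?_)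
    · simpa [sub_eq_zero] using Subtype.coe_injective.ne hne
    · rw [Submodule.coe_sub, lie_sub, sub_eq_zero]
      exact congrArg Subtype.val huw
  obtain ⟨t, v, hv₀, hv⟩ := exists_apply_eq_smul_apply_of_skew (hskew s hs) (hskew ζ hζ) hcomm hinj
  refine ⟨t, sub_eq_zero.mp (hd.eq_zero_of_lie_eq_zero hκ (sub_mem hζ (𝔨.smul_mem t hs)) ?_ v.2
    (by simpa using hv₀) ?_)⟩
  · intro b hb
    rw [sub_lie, smul_lie, hζc b hb, hsc b hb, smul_zero, sub_zero]
  · rw [sub_lie, smul_lie, sub_eq_zero]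
    exact congrArg Subtype.val hv

end IsIsotropyDecomposition

end Isotropy

section SemisimplePart

variable {𝔤 : Type*} [LieRing 𝔤] [LieAlgebra ℝ 𝔤] [FiniteDimensional ℝ 𝔤]
  {𝔨 : LieSubalgebra ℝ 𝔤}

local notation "κ" => killingForm ℝ 𝔤

open Submodule

lemma mem_span_lie_of_forall_lie_eq_zero (hκ : ∀ x : 𝔤, x ≠ 0 → κ x x < 0)
    {𝔨₁ : LieSubalgebra ℝ 𝔤} (h𝔨₁𝔨 : 𝔨₁ ≤ 𝔨) (hder : ∀ x ∈ 𝔨, ∀ y ∈ 𝔨, ⁅x, y⁆ ∈ 𝔨₁)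
    (hcent : ∀ ζ ∈ 𝔨₁, (∀ b ∈ 𝔨, ⁅ζ, b⁆ = 0) → ζ = 0) {a : 𝔤} (ha : a ∈ 𝔨₁) :
    a ∈ span ℝ {x | ∃ b ∈ 𝔨, ∃ b' ∈ 𝔨, ⁅b, b'⁆ = x} := by
  set D := span ℝ {x | ∃ b ∈ 𝔨, ∃ b' ∈ 𝔨, ⁅b, b'⁆ = x}
  obtain ⟨d, hdD, w, hw, rfl⟩ :=
    mem_sup.mp ((isCompl_killingForm_orthogonal hκ D).sup_eq_top ▸ mem_top (x := a))
  have hD : D ≤ 𝔨₁.toSubmodule := span_le.mpr fun _ ⟨b, hb, b', hb', h⟩ => h ▸ hder b hb b' hb'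
  have hw₁ : w ∈ 𝔨₁ := by simpa using sub_mem ha (hD hdD)
  -- `κ ⁅w, b⁆ ⁅w, b⁆ = κ ⁅b, ⁅w, b⁆⁆ w` vanishes because `w` is orthogonal to `⁅𝔨, 𝔨⁆`
  have hw₀ : w = 0 := hcent w hw₁ fun b hb => eq_zero_of_killingForm_self_eq_zero_s5 hκ <| by
    rw [LieModule.traceForm_apply_lie_apply, LieModule.traceForm_comm]
    exact hw _ (subset_span ⟨b, hb, _, 𝔨.lie_mem (h𝔨₁𝔨 hw₁) hb, rfl⟩)
  simpa [hw₀] using hdD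

lemma lie_eq_zero_of_mem_span_lie (hκ : ∀ x : 𝔤, x ≠ 0 → κ x x < 0) {W : Submodule ℝ 𝔤}
    (hW : finrank ℝ W = 2) (hinv : AdInvariant 𝔨 W) {a : 𝔤}
    (ha : a ∈ span ℝ {x | ∃ b ∈ 𝔨, ∃ b' ∈ 𝔨, ⁅b, b'⁆ = x}) {x : 𝔤} (hx : x ∈ W) :
    ⁅a, x⁆ = 0 := by
  induction ha using span_induction with
  | mem y hy =>
    obtain ⟨b, hb, b', hb', rfl⟩ := hy
    exact lie_lie_eq_zero_of_finrank_eq_two hκ hW (hinv b hb) (hinv b' hb') hx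
  | zero => exact zero_lie x
  | add y z _ _ hy hz => rw [add_lie, hy, hz, add_zero]
  | smul c y _ hy => rw [smul_lie, hy, smul_zero]

lemma IsIsotropyDecomposition.eq_zero_of_mem_of_lie_eq_zero [LieAlgebra.IsSimple ℝ 𝔤]
    (hκ : ∀ x : 𝔤, x ≠ 0 → κ x x < 0) {m₁ m₂ : Submodule ℝ 𝔤}
    (hd : IsIsotropyDecomposition 𝔨 m₁ m₂) {𝔰 𝔨₁ : LieSubalgebra ℝ 𝔤}
    (h𝔨cent : ∀ x : 𝔤, x ∈ 𝔨 ↔ ∀ s ∈ 𝔰, ⁅s, x⁆ = 0) (h𝔰𝔨 : 𝔰 ≤ 𝔨) (h𝔨₁𝔨 : 𝔨₁ ≤ 𝔨)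
    (h𝔨disj : Disjoint 𝔰.toSubmodule 𝔨₁.toSubmodule) {ζ : 𝔤} (hζ : ζ ∈ 𝔨₁)
    (hζc : ∀ b ∈ 𝔨, ⁅ζ, b⁆ = 0) : ζ = 0 := by
  obtain ⟨s, hs, hs₀⟩ : ∃ s ∈ 𝔰, s ≠ 0 := by
    by_contra! h
    have hm₂ : m₂ ≠ ⊥ := by
      rintro rfl
      simpa using hd.finrank_m₂
    obtain ⟨e, he, he₀⟩ := (Submodule.ne_bot_iff m₂).mp hm₂
    have he𝔨 : e ∈ 𝔨 := (h𝔨cent e).mpr fun s hs => by rw [h s hs, zero_lie]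
    exact he₀ (disjoint_def.mp hd.isCompl.disjoint e he𝔨 (mem_sup_right he))
  obtain ⟨t, rfl⟩ := hd.exists_eq_smul_of_lie_eq_zero hκ (h𝔰𝔨 hs)
    (fun b hb => (h𝔨cent b).mp hb s hs) hs₀ (h𝔨₁𝔨 hζ) hζc
  exact disjoint_def.mp h𝔨disj _ (smul_mem _ t hs) hζ

lemma IsIsotropyDecomposition.lie_eq_zero_of_mem_of_mem_m₂ [LieAlgebra.IsSimple ℝ 𝔤]
    (hκ : ∀ x : 𝔤, x ≠ 0 → κ x x < 0) {m₁ m₂ : Submodule ℝ 𝔤}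
    (hd : IsIsotropyDecomposition 𝔨 m₁ m₂) {𝔰 𝔨₁ : LieSubalgebra ℝ 𝔤}
    (h𝔨cent : ∀ x : 𝔤, x ∈ 𝔨 ↔ ∀ s ∈ 𝔰, ⁅s, x⁆ = 0) (h𝔰𝔨 : 𝔰 ≤ 𝔨) (h𝔨₁𝔨 : 𝔨₁ ≤ 𝔨)
    (h𝔨disj : Disjoint 𝔰.toSubmodule 𝔨₁.toSubmodule) (hder : ∀ x ∈ 𝔨, ∀ y ∈ 𝔨, ⁅x, y⁆ ∈ 𝔨₁)
    {a : 𝔤} (ha : a ∈ 𝔨₁) {x : 𝔤} (hx : x ∈ m₂) : ⁅a, x⁆ = 0 :=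
  lie_eq_zero_of_mem_span_lie hκ hd.finrank_m₂ hd.invariant_m₂
    (mem_span_lie_of_forall_lie_eq_zero hκ h𝔨₁𝔨 hder
      (fun _ hζ hζc => hd.eq_zero_of_mem_of_lie_eq_zero hκ h𝔨cent h𝔰𝔨 h𝔨₁𝔨 h𝔨disj hζ hζc) ha) hx

end SemisimplePart

section GeodesicOrbit

variable {𝔤 : Type*} [LieRing 𝔤] [LieAlgebra ℝ 𝔤]

open Submodule

lemma exists_linearMap_eq_smul_of_isCompl {K M : Type*} [CommRing K] [AddCommGroup M]
    [Module K M] {Q R : Submodule K M} (h : IsCompl Q R) (μ ν : K) :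
    ∃ Λ : M →ₗ[K] M, (∀ x ∈ R, Λ x = μ • x) ∧ ∀ x ∈ Q, Λ x = ν • x :=
  ⟨LinearMap.ofIsCompl h (ν • Q.subtype) (μ • R.subtype),
    fun x hx => LinearMap.ofIsCompl_apply_right h ⟨x, hx⟩,
    fun x hx => LinearMap.ofIsCompl_apply_left h ⟨x, hx⟩⟩

lemma lie_add_add_smul_add_smul {a Y X : 𝔤} (μ ν : ℝ) (h : ⁅a, Y⁆ = 0) :
    ⁅a + (Y + X), μ • Y + ν • X⁆ = ⁅ν • a + (ν - μ) • Y, X⁆ := by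
  simp only [add_lie, lie_add, lie_smul, smul_lie, h, lie_self, ← lie_skew X Y]
  module

theorem forall_isGOMetric_iff {𝔨₁ : LieSubalgebra ℝ 𝔤} {P Q R : Submodule ℝ 𝔤}
    (hQR : IsCompl Q R) (hPR : P ≤ R) (h𝔨₁R : 𝔨₁.toSubmodule ≤ R)
    (hcomm : ∀ a ∈ 𝔨₁, ∀ Y ∈ P, ⁅a, Y⁆ = 0) (hQ : ∀ b ∈ 𝔨₁.toSubmodule ⊔ P, ∀ X ∈ Q, ⁅b, X⁆ ∈ Q) :
    (∀ μ μ₁ : ℝ, 0 < μ → 0 < μ₁ → μ ≠ μ₁ → ∀ Λ : 𝔤 →ₗ[ℝ] 𝔤,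
        (∀ x ∈ P, Λ x = μ • x) → (∀ x ∈ Q, Λ x = μ₁ • x) → IsGOMetric 𝔨₁ (P ⊔ Q) Λ) ↔
      ∀ Y ∈ P, ∀ X ∈ Q, ∃ k ∈ 𝔨₁, ⁅k + Y, X⁆ = 0 := by
  constructor
  · intro hGO Y hY X hX
    obtain ⟨Λ, hΛR, hΛQ⟩ := exists_linearMap_eq_smul_of_isCompl hQR (2 : ℝ) 1
    obtain ⟨a, ha, hmem⟩ := hGO 2 1 two_pos one_pos (by norm_num) Λ (fun x hx => hΛR x (hPR hx))
      hΛQ (Y + X) (add_mem_sup hY hX)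
    rw [map_add, hΛR Y (hPR hY), hΛQ X hX, lie_add_add_smul_add_smul _ _ (hcomm a ha Y hY)]
      at hmem
    rw [show (1 : ℝ) • a + (1 - 2 : ℝ) • Y = a - Y by module] at hmem
    have hQmem := hQ _ (sub_mem (mem_sup_left ha) (mem_sup_right hY)) X hX
    have h₀ := disjoint_def.mp (hQR.disjoint.mono_right h𝔨₁R) _ hQmem hmem
    refine ⟨-a, neg_mem ha, ?_⟩
    rw [neg_add_eq_sub, ← neg_sub, neg_lie, h₀, neg_zero]
  · intro hk μ μ₁ _ hμ₁ _ Λ hΛP hΛQ x hx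
    obtain ⟨Y, hY, X, hX, rfl⟩ := mem_sup.mp hx
    obtain ⟨k, hk, hk₀⟩ := hk (((μ₁ - μ) / μ₁) • Y) (P.smul_mem _ hY) X hX
    refine ⟨k, hk, ?_⟩
    rw [map_add, hΛP Y hY, hΛQ X hX, lie_add_add_smul_add_smul _ _ (hcomm k hk Y hY),
      show μ₁ • k + (μ₁ - μ) • Y = μ₁ • (k + ((μ₁ - μ) / μ₁) • Y) by
        rw [smul_add, smul_smul, mul_div_cancel₀ _ hμ₁.ne'],
      smul_lie, hk₀, smul_zero]
    exact zero_mem _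

end GeodesicOrbit

theorem goMetric_iff_of_two_summands_dim_two_general
    {𝔤 : Type*} [LieRing 𝔤] [LieAlgebra ℝ 𝔤] [FiniteDimensional ℝ 𝔤]
    -- `G` is a compact simple Lie group: `𝔤` is simple with negative definite Killing form
    [LieAlgebra.IsSimple ℝ 𝔤]
    (hcompact : ∀ x : 𝔤, x ≠ 0 → killingForm ℝ 𝔤 x x < 0)
    (𝔨 𝔨₁ 𝔰 : LieSubalgebra ℝ 𝔤)
    -- `S` is a torus in `G` and `K = C(S)` is its centralizer
    (h𝔨cent : ∀ x : 𝔤, x ∈ 𝔨 ↔ ∀ s ∈ 𝔰, ⁅s, x⁆ = 0)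
    -- `K = S × K₁`, `K₁` being the semisimple part of `K`
    (h𝔰𝔨 : 𝔰 ≤ 𝔨) (h𝔨₁𝔨 : 𝔨₁ ≤ 𝔨)
    (h𝔨disj : Disjoint 𝔰.toSubmodule 𝔨₁.toSubmodule)
    (h𝔰𝔨₁ : ∀ s ∈ 𝔰, ∀ k ∈ 𝔨₁, ⁅s, k⁆ = (0 : 𝔤))
    (hder : ∀ x ∈ 𝔨, ∀ y ∈ 𝔨, ⁅x, y⁆ ∈ 𝔨₁)
    -- the `B`-orthogonal reductive decomposition `𝔤 = 𝔨 ⊕ 𝔪`, where `B = -Killing form`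
    (𝔪 : Submodule ℝ 𝔤)
    (h𝔪compl : IsCompl 𝔨.toSubmodule 𝔪)
    (h𝔪orth : ∀ x ∈ 𝔨, ∀ y ∈ 𝔪, killingForm ℝ 𝔤 x y = 0)
    -- the decomposition `𝔪 = 𝔪₁ ⊕ 𝔪₂`, `B`-orthogonal, into two pairwise inequivalent
    -- irreducible `Ad(K)`-submodules, with the convention `[𝔪₁, 𝔪₁] ⊆ 𝔨 ⊕ 𝔪₂`
    (m₁ m₂ : Submodule ℝ 𝔤)
    (hmsub₁ : m₁ ≤ 𝔪) (hmsub₂ : m₂ ≤ 𝔪)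
    (hmsum : m₁ ⊔ m₂ = 𝔪)
    (hmorth : ∀ x ∈ m₁, ∀ y ∈ m₂, killingForm ℝ 𝔤 x y = 0)
    (hmirr₁ : AdIrreducible 𝔨 m₁) (hmirr₂ : AdIrreducible 𝔨 m₂)
    -- `dim 𝔪₂ = 2`
    (hdim : Module.finrank ℝ m₂ = 2) :
    -- the metric `g = μ B(·,·)|_{𝔰 ⊕ 𝔪₂} + μ₁ B(·,·)|_{𝔪₁}` is g.o. for every `μ ≠ μ₁`
    (∀ μ μ₁ : ℝ, 0 < μ → 0 < μ₁ → μ ≠ μ₁ → ∀ Λ : 𝔤 →ₗ[ℝ] 𝔤,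
        (∀ x ∈ 𝔰.toSubmodule ⊔ m₂, Λ x = μ • x) → (∀ x ∈ m₁, Λ x = μ₁ • x) →
        IsGOMetric 𝔨₁ (𝔰.toSubmodule ⊔ 𝔪) Λ) ↔
      ∀ V ∈ 𝔰.toSubmodule, ∀ X₁ ∈ m₁, ∀ X₂ ∈ m₂, ∃ k ∈ 𝔨₁,
        ⁅k + V + X₂, X₁⁆ = (0 : 𝔤) := by
  have hcompl : IsCompl 𝔨.toSubmodule (m₁ ⊔ m₂) := hmsum ▸ h𝔪compl
  have hd : IsIsotropyDecomposition 𝔨 m₁ m₂ :=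
    { isCompl := hcompl
      killingForm_k_m₁ := fun x hx y hy => h𝔪orth x hx y (hmsub₁ hy)
      killingForm_k_m₂ := fun x hx y hy => h𝔪orth x hx y (hmsub₂ hy)
      killingForm_m₁_m₂ := hmorth
      irreducible_m₁ := hmirr₁
      no_fixed_m₁ := fun y hy hfix => Submodule.disjoint_def.mp hcompl.disjoint y
        ((h𝔨cent y).mpr fun s hs => hfix s (h𝔰𝔨 hs)) (Submodule.mem_sup_left hy)
      invariant_m₂ := hmirr₂.1
      finrank_m₂ := hdim }
  have hcomm : ∀ a ∈ 𝔨₁, ∀ Y ∈ 𝔰.toSubmodule ⊔ m₂, ⁅a, Y⁆ = 0 := fun a ha =>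
    (Submodule.forall_mem_sup _ _).mpr fun V hV x hx => by
      rw [lie_add, ← lie_skew, h𝔰𝔨₁ V hV a ha, neg_zero, zero_add,
        hd.lie_eq_zero_of_mem_of_mem_m₂ hcompact h𝔨cent h𝔰𝔨 h𝔨₁𝔨 h𝔨disj hder ha hx]
  have hPR : 𝔰.toSubmodule ⊔ m₂ ≤ 𝔨.toSubmodule ⊔ m₂ :=
    sup_le_sup_right ((LieSubalgebra.toSubmodule_le_toSubmodule _ _).mpr h𝔰𝔨) _
  have h𝔨₁R : 𝔨₁.toSubmodule ≤ 𝔨.toSubmodule ⊔ m₂ :=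
    le_sup_of_le_left ((LieSubalgebra.toSubmodule_le_toSubmodule _ _).mpr h𝔨₁𝔨)
  rw [← hmsum, sup_comm m₁, ← sup_assoc,
    forall_isGOMetric_iff (hd.isCompl_m₁ hcompact) hPR h𝔨₁R hcomm
      fun b hb => hd.lie_mem_m₁_of_mem_sup hcompact b (sup_le h𝔨₁R hPR hb)]
  simp only [Submodule.forall_mem_sup, add_assoc]
  exact ⟨fun h V hV X₁ hX₁ X₂ hX₂ => h V hV X₂ hX₂ X₁ hX₁,
    fun h V hV X₂ hX₂ X₁ hX₁ => h V hV X₁ hX₁ X₂ hX₂⟩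

/-- **Corollary 2** (Arvanitoyeorgos–Wang–Zhao).
Let `G/K` be a generalized flag manifold with two isotropy summands `𝔪 = 𝔪₁ ⊕ 𝔪₂` and
`dim 𝔪₂ = 2`.  The corresponding `M`-space `(G/K₁, g)` with
`g = μ B(·,·)|_{𝔰 ⊕ 𝔪₂} + μ₁ B(·,·)|_{𝔪₁}` is a g.o. space for every `μ ≠ μ₁` if and
only if for every `V ∈ 𝔰`, `X₁ ∈ 𝔪₁`, `X₂ ∈ 𝔪₂` there is `k ∈ 𝔨₁` with
`[k + V + X₂, X₁] = 0`. -/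
theorem goMetric_iff_of_two_summands_dim_two
    {𝔤 : Type*} [LieRing 𝔤] [LieAlgebra ℝ 𝔤] [FiniteDimensional ℝ 𝔤]
    -- `G` is a compact simple Lie group: `𝔤` is simple with negative definite Killing form
    [LieAlgebra.IsSimple ℝ 𝔤]
    (hcompact : ∀ x : 𝔤, x ≠ 0 → killingForm ℝ 𝔤 x x < 0)
    (𝔨 𝔨₁ 𝔰 : LieSubalgebra ℝ 𝔤)
    -- `S` is a torus in `G` and `K = C(S)` is its centralizer
    (h𝔰ab : ∀ x ∈ 𝔰, ∀ y ∈ 𝔰, ⁅x, y⁆ = (0 : 𝔤))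
    (h𝔨cent : ∀ x : 𝔤, x ∈ 𝔨 ↔ ∀ s ∈ 𝔰, ⁅s, x⁆ = 0)
    -- `K = S × K₁`, `K₁` being the semisimple part of `K`
    (h𝔰𝔨 : 𝔰 ≤ 𝔨) (h𝔨₁𝔨 : 𝔨₁ ≤ 𝔨)
    (h𝔨sum : 𝔰.toSubmodule ⊔ 𝔨₁.toSubmodule = 𝔨.toSubmodule)
    (h𝔨disj : Disjoint 𝔰.toSubmodule 𝔨₁.toSubmodule)
    (h𝔰𝔨₁ : ∀ s ∈ 𝔰, ∀ k ∈ 𝔨₁, ⁅s, k⁆ = (0 : 𝔤))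
    (hder : ∀ x ∈ 𝔨, ∀ y ∈ 𝔨, ⁅x, y⁆ ∈ 𝔨₁)
    -- the `B`-orthogonal reductive decomposition `𝔤 = 𝔨 ⊕ 𝔪`, where `B = -Killing form`
    (𝔪 : Submodule ℝ 𝔤)
    (h𝔪compl : IsCompl 𝔨.toSubmodule 𝔪)
    (h𝔪orth : ∀ x ∈ 𝔨, ∀ y ∈ 𝔪, killingForm ℝ 𝔤 x y = 0)
    (h𝔪inv : AdInvariant 𝔨 𝔪)
    -- the decomposition `𝔪 = 𝔪₁ ⊕ 𝔪₂`, `B`-orthogonal, into two pairwise inequivalent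
    -- irreducible `Ad(K)`-submodules, with the convention `[𝔪₁, 𝔪₁] ⊆ 𝔨 ⊕ 𝔪₂`
    (m₁ m₂ : Submodule ℝ 𝔤)
    (hmsub₁ : m₁ ≤ 𝔪) (hmsub₂ : m₂ ≤ 𝔪)
    (hmsum : m₁ ⊔ m₂ = 𝔪)
    (hmorth : ∀ x ∈ m₁, ∀ y ∈ m₂, killingForm ℝ 𝔤 x y = 0)
    (hmirr₁ : AdIrreducible 𝔨 m₁) (hmirr₂ : AdIrreducible 𝔨 m₂)
    (hmineq : ¬ AdEquiv 𝔨 m₁ m₂)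
    (hconv : ∀ x ∈ m₁, ∀ y ∈ m₁, ⁅x, y⁆ ∈ 𝔨.toSubmodule ⊔ m₂)
    -- `dim 𝔪₂ = 2`
    (hdim : Module.finrank ℝ m₂ = 2) :
    -- the metric `g = μ B(·,·)|_{𝔰 ⊕ 𝔪₂} + μ₁ B(·,·)|_{𝔪₁}` is g.o. for every `μ ≠ μ₁`
    (∀ μ μ₁ : ℝ, 0 < μ → 0 < μ₁ → μ ≠ μ₁ → ∀ Λ : 𝔤 →ₗ[ℝ] 𝔤,
        (∀ x ∈ 𝔰.toSubmodule ⊔ m₂, Λ x = μ • x) → (∀ x ∈ m₁, Λ x = μ₁ • x) →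
        IsGOMetric 𝔨₁ (𝔰.toSubmodule ⊔ 𝔪) Λ) ↔
      ∀ V ∈ 𝔰.toSubmodule, ∀ X₁ ∈ m₁, ∀ X₂ ∈ m₂, ∃ k ∈ 𝔨₁,
        ⁅k + V + X₂, X₁⁆ = (0 : 𝔤) :=
  goMetric_iff_of_two_summands_dim_two_general hcompact 𝔨 𝔨₁ 𝔰 h𝔨cent h𝔰𝔨 h𝔨₁𝔨 h𝔨disj h𝔰𝔨₁ hder 𝔪
    h𝔪compl h𝔪orth m₁ m₂ hmsub₁ hmsub₂ hmsum hmorth hmirr₁ hmirr₂ hdim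
end
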